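/- arXiv:2412.15877 — 3 statements merged into one kernel-verified Lean document; each statement's English description precedes it below -/
import Mathlib

section
/- Suppose the aggregation map φ satisfies: φ(s1) = φ(s2) implies |Q*(s1, a) − Q*(s2, a)| ≤ ε for all a ∈ A1×A2, for some ε ≥ 0. Then the ground policy profile π_GA* induced by a Nash equilibrium π_A* of the abstract game satisfies GAP(π_GA*) ≤ 12·ε/(1−γ)³. -/
open Finset

/-- A mixed Markov policy: a probability distribution over actions at each state. -/
def IsPolicy {S A : Type*} [Fintype A] (π : S → A → ℝ) : Prop :=
  (∀ s a, 0 ≤ π s a) ∧ ∀ s, ∑ a, π s a = 1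

/-- A transition kernel: a probability distribution over next states for every
state and joint action. -/
def IsKernel {S A1 A2 : Type*} [Fintype S] (P : S → A1 → A2 → S → ℝ) : Prop :=
  (∀ s a1 a2 s', 0 ≤ P s a1 a2 s') ∧ ∀ s a1 a2, ∑ s', P s a1 a2 s' = 1

/-- Rewards lie in `[0,1]`. -/
def IsReward {S A1 A2 : Type*} (R : S → A1 → A2 → ℝ) : Prop :=
  ∀ s a1 a2, 0 ≤ R s a1 a2 ∧ R s a1 a2 ≤ 1

/-- The state-action value induced by a state value function `V`:
`Q(s,a) = R(s,a) + γ * Σ_{s'} P(s'|s,a) V(s')`. -/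
def Qf {S A1 A2 : Type*} [Fintype S] (R : S → A1 → A2 → ℝ) (P : S → A1 → A2 → S → ℝ)
    (γ : ℝ) (V : S → ℝ) (s : S) (a1 : A1) (a2 : A2) : ℝ :=
  R s a1 a2 + γ * ∑ s', P s a1 a2 s' * V s'

/-- `V` satisfies the Bellman equation for the policy profile `(π1, π2)`. -/
def IsValue {S A1 A2 : Type*} [Fintype S] [Fintype A1] [Fintype A2]
    (R : S → A1 → A2 → ℝ) (P : S → A1 → A2 → S → ℝ) (γ : ℝ)
    (π1 : S → A1 → ℝ) (π2 : S → A2 → ℝ) (V : S → ℝ) : Prop :=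
  ∀ s, V s = ∑ a1, ∑ a2, π1 s a1 * π2 s a2 * Qf R P γ V s a1 a2

/-- `Val` assigns to every policy profile its value function. -/
def IsValueOperator {S A1 A2 : Type*} [Fintype S] [Fintype A1] [Fintype A2]
    (R : S → A1 → A2 → ℝ) (P : S → A1 → A2 → S → ℝ) (γ : ℝ)
    (Val : (S → A1 → ℝ) → (S → A2 → ℝ) → S → ℝ) : Prop :=
  ∀ π1 π2, IsPolicy π1 → IsPolicy π2 → IsValue R P γ π1 π2 (Val π1 π2)

/-- `(π1, π2)` is a Nash equilibrium of the game whose values are given by `Val`: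
for all states `s` and all policies `π1'`, `π2'`,
`Val π1 π2' s ≥ Val π1 π2 s ≥ Val π1' π2 s`. -/
def IsNash {S A1 A2 : Type*} [Fintype A1] [Fintype A2]
    (Val : (S → A1 → ℝ) → (S → A2 → ℝ) → S → ℝ)
    (π1 : S → A1 → ℝ) (π2 : S → A2 → ℝ) : Prop :=
  IsPolicy π1 ∧ IsPolicy π2 ∧
    ∀ s, ∀ π1' π2', IsPolicy π1' → IsPolicy π2' →
      Val π1 π2' s ≥ Val π1 π2 s ∧ Val π1 π2 s ≥ Val π1' π2 s

/-- `π1d` is a best response for player 1 against the player-2 policy `π2`: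
`Val π1d π2 s = max_{π1} Val π1 π2 s` for every state `s`. -/
def IsBestResponse1 {S A1 A2 : Type*} [Fintype A1]
    (Val : (S → A1 → ℝ) → (S → A2 → ℝ) → S → ℝ)
    (π1d : S → A1 → ℝ) (π2 : S → A2 → ℝ) : Prop :=
  IsPolicy π1d ∧ ∀ π1, IsPolicy π1 → ∀ s, Val π1 π2 s ≤ Val π1d π2 s

/-- A weight function for the aggregation map `φ`: weights lie in `[0,1]` and sum
to one within each aggregated class. -/
def IsAggWeight {S SA : Type*} [Fintype S] [DecidableEq SA] (φ : S → SA) (w : S → ℝ) : Prop :=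
  (∀ s, 0 ≤ w s ∧ w s ≤ 1) ∧ ∀ sA : SA, ∑ s ∈ univ.filter (fun s => φ s = sA), w s = 1

/-- The abstract transition kernel:
`P_A(s_A'|s_A,a) = Σ_{s : φ s = s_A} Σ_{s' : φ s' = s_A'} P(s'|s,a) w(s)`. -/
def PA {S SA A1 A2 : Type*} [Fintype S] [DecidableEq SA]
    (P : S → A1 → A2 → S → ℝ) (φ : S → SA) (w : S → ℝ)
    (sA : SA) (a1 : A1) (a2 : A2) (sA' : SA) : ℝ :=
  ∑ s ∈ univ.filter (fun s => φ s = sA),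
    ∑ s' ∈ univ.filter (fun s' => φ s' = sA'), P s a1 a2 s' * w s

/-- The abstract reward function:
`R_A(s_A,a) = Σ_{s : φ s = s_A} R(s,a) w(s)`. -/
def RA {S SA A1 A2 : Type*} [Fintype S] [DecidableEq SA]
    (R : S → A1 → A2 → ℝ) (φ : S → SA) (w : S → ℝ)
    (sA : SA) (a1 : A1) (a2 : A2) : ℝ :=
  ∑ s ∈ univ.filter (fun s => φ s = sA), R s a1 a2 * w s

/-!
Let `V` be the ground equilibrium value and `V_A` the abstract one. At `φ s`, the abstract
`Q`-function of `V_A` is the `w`-average over the class of `s` of ground `Q`-functions of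
`V_A ∘ φ`, so by the hypothesis on `Q*` it is `(ε + γ c)`-close to `Q*(s, ·)` when `V_A ∘ φ`
is `c`-close to `V`. Equilibrium values are saddle values of these one-step matrix games, and
saddle values of `η`-close matrix games are `η`-close; hence the distance `c` between `V_A ∘ φ`
and `V` satisfies `c ≤ ε + γ c`, i.e. `c ≤ ε / (1 - γ)`, and the `Q`-functions are
`ε / (1 - γ)`-close too. Against the lifted abstract strategy of the opponent, a deviating player
therefore gains at most `2ε / (1 - γ)` over `V` in one Bellman step, hence at most
`2ε / (1 - γ)²` in value, and the gap is at most `4ε / (1 - γ)² ≤ 12ε / (1 - γ)³`.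
-/

section WeightedAverage

variable {ι : Type*} {t : Finset ι} {p f g : ι → ℝ} {c : ℝ}

lemma sum_mul_le_sum_mul_add (hp0 : ∀ i ∈ t, 0 ≤ p i) (hp1 : ∑ i ∈ t, p i = 1)
    (h : ∀ i ∈ t, f i ≤ g i + c) : ∑ i ∈ t, p i * f i ≤ ∑ i ∈ t, p i * g i + c :=
  calc ∑ i ∈ t, p i * f i ≤ ∑ i ∈ t, p i * (g i + c) :=
        sum_le_sum fun i hi => mul_le_mul_of_nonneg_left (h i hi) (hp0 i hi)
    _ = ∑ i ∈ t, p i * g i + c := by simp only [mul_add, sum_add_distrib, ← sum_mul, hp1, one_mul]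

lemma abs_sum_mul_sub_sum_mul_le (hp0 : ∀ i ∈ t, 0 ≤ p i) (hp1 : ∑ i ∈ t, p i = 1)
    (h : ∀ i ∈ t, |f i - g i| ≤ c) : |∑ i ∈ t, p i * f i - ∑ i ∈ t, p i * g i| ≤ c := by
  rw [abs_sub_le_iff, sub_le_iff_le_add', sub_le_iff_le_add']
  exact ⟨sum_mul_le_sum_mul_add hp0 hp1 fun i hi =>
      sub_le_iff_le_add'.1 (abs_sub_le_iff.1 (h i hi)).1,
    sum_mul_le_sum_mul_add hp0 hp1 fun i hi =>
      sub_le_iff_le_add'.1 (abs_sub_le_iff.1 (h i hi)).2⟩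

end WeightedAverage

section MatrixGame

variable {A1 A2 : Type*} [Fintype A1] [Fintype A2]

def payoff (M : A1 → A2 → ℝ) (p : A1 → ℝ) (q : A2 → ℝ) : ℝ :=
  ∑ a1, ∑ a2, p a1 * q a2 * M a1 a2

lemma payoff_eq_sum_mul_sum_mul (M : A1 → A2 → ℝ) (p : A1 → ℝ) (q : A2 → ℝ) :
    payoff M p q = ∑ a1, p a1 * ∑ a2, q a2 * M a1 a2 := by
  simp only [payoff, mul_sum, mul_assoc]

lemma payoff_le_payoff_add {M N : A1 → A2 → ℝ} {p : A1 → ℝ} {q : A2 → ℝ} {c : ℝ}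
    (hp : p ∈ stdSimplex ℝ A1) (hq : q ∈ stdSimplex ℝ A2)
    (h : ∀ a1 a2, M a1 a2 ≤ N a1 a2 + c) : payoff M p q ≤ payoff N p q + c := by
  simp only [payoff_eq_sum_mul_sum_mul]
  exact sum_mul_le_sum_mul_add (fun a _ => hp.1 a) hp.2 fun a1 _ =>
    sum_mul_le_sum_mul_add (fun a _ => hq.1 a) hq.2 fun a2 _ => h a1 a2

structure IsSaddlePoint (M : A1 → A2 → ℝ) (p : A1 → ℝ) (q : A2 → ℝ) (v : ℝ) : Prop where
  left_mem : p ∈ stdSimplex ℝ A1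
  right_mem : q ∈ stdSimplex ℝ A2
  payoff_le : ∀ p' ∈ stdSimplex ℝ A1, payoff M p' q ≤ v
  le_payoff : ∀ q' ∈ stdSimplex ℝ A2, v ≤ payoff M p q'

namespace IsSaddlePoint

variable {M N : A1 → A2 → ℝ} {p p' : A1 → ℝ} {q q' : A2 → ℝ} {v c : ℝ}

lemma payoff_le_add (h : IsSaddlePoint N p q v) (hp' : p' ∈ stdSimplex ℝ A1)
    (hMN : ∀ a1 a2, |M a1 a2 - N a1 a2| ≤ c) : payoff M p' q ≤ v + c :=
  (payoff_le_payoff_add hp' h.right_mem fun a1 a2 =>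
    sub_le_iff_le_add'.1 (abs_sub_le_iff.1 (hMN a1 a2)).1).trans
      (add_le_add_left (h.payoff_le p' hp') c)

lemma le_payoff_add (h : IsSaddlePoint N p q v) (hq' : q' ∈ stdSimplex ℝ A2)
    (hMN : ∀ a1 a2, |M a1 a2 - N a1 a2| ≤ c) : v ≤ payoff M p q' + c :=
  (h.le_payoff q' hq').trans (payoff_le_payoff_add h.left_mem hq' fun a1 a2 =>
    sub_le_iff_le_add'.1 (abs_sub_le_iff.1 (hMN a1 a2)).2)

lemma abs_sub_le {p₂ : A1 → ℝ} {q₂ : A2 → ℝ} {v₂ : ℝ} (h : IsSaddlePoint M p q v)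
    (h₂ : IsSaddlePoint N p₂ q₂ v₂) (hMN : ∀ a1 a2, |M a1 a2 - N a1 a2| ≤ c) :
    |v - v₂| ≤ c :=
  abs_sub_le_iff.2
    ⟨by linarith [h.le_payoff q₂ h₂.right_mem, h₂.payoff_le_add h.left_mem hMN],
      by linarith [h₂.le_payoff_add h.right_mem hMN, h.payoff_le p₂ h₂.left_mem]⟩

end IsSaddlePoint

end MatrixGame

lemma IsPolicy.mem_stdSimplex {S A : Type*} [Fintype A] {π : S → A → ℝ} (h : IsPolicy π)
    (s : S) : π s ∈ stdSimplex ℝ A :=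
  ⟨h.1 s, h.2 s⟩

lemma IsPolicy.update {S A : Type*} [Fintype A] [DecidableEq S] {π : S → A → ℝ}
    (h : IsPolicy π) (s : S) {p : A → ℝ} (hp : p ∈ stdSimplex ℝ A) :
    IsPolicy (Function.update π s p) := by
  refine ⟨fun s' a => ?_, fun s' => ?_⟩ <;> rcases eq_or_ne s' s with rfl | hs
  · simpa using hp.1 a
  · simpa [Function.update_of_ne hs] using h.1 s' a
  · simpa using hp.2
  · simpa [Function.update_of_ne hs] using h.2 s'

lemma IsPolicy.comp {S S' A : Type*} [Fintype A] {π : S' → A → ℝ} (h : IsPolicy π)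
    (φ : S → S') : IsPolicy fun s => π (φ s) :=
  ⟨fun s => h.1 (φ s), fun s => h.2 (φ s)⟩

lemma le_div_one_sub_of_le_add_mul {S : Type*} [Finite S] {u : S → ℝ} {γ δ : ℝ} (hγ1 : γ < 1)
    (h : ∀ c, (∀ s, u s ≤ c) → ∀ s, u s ≤ δ + γ * c) (s : S) : u s ≤ δ / (1 - γ) := by
  have : Nonempty S := ⟨s⟩
  obtain ⟨s₀, hs₀⟩ := Finite.exists_max u
  have hγ' : 0 < 1 - γ := sub_pos.2 hγ1
  rw [le_div_iff₀ hγ']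
  nlinarith [h (u s₀) hs₀ s₀, mul_le_mul_of_nonneg_right (hs₀ s) hγ'.le]

section Bellman

variable {S A1 A2 : Type*} [Fintype S] {R : S → A1 → A2 → ℝ} {P : S → A1 → A2 → S → ℝ} {γ : ℝ}

lemma Qf_le_Qf_add (hP : IsKernel P) (hγ0 : 0 ≤ γ) {V W : S → ℝ} {c : ℝ}
    (h : ∀ s, V s ≤ W s + c) (s : S) (a1 : A1) (a2 : A2) :
    Qf R P γ V s a1 a2 ≤ Qf R P γ W s a1 a2 + γ * c := by
  have := sum_mul_le_sum_mul_add (t := univ) (fun s' _ => hP.1 s a1 a2 s') (hP.2 s a1 a2)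
    fun s' _ => h s'
  simp only [Qf]
  linarith [mul_le_mul_of_nonneg_left this hγ0]

lemma abs_Qf_sub_Qf_le (hP : IsKernel P) (hγ0 : 0 ≤ γ) {V W : S → ℝ} {c : ℝ}
    (h : ∀ s, |V s - W s| ≤ c) (s : S) (a1 : A1) (a2 : A2) :
    |Qf R P γ V s a1 a2 - Qf R P γ W s a1 a2| ≤ γ * c := by
  rw [abs_sub_le_iff, sub_le_iff_le_add', sub_le_iff_le_add']
  exact ⟨Qf_le_Qf_add hP hγ0 (fun s => sub_le_iff_le_add'.1 (abs_sub_le_iff.1 (h s)).1) s a1 a2,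
    Qf_le_Qf_add hP hγ0 (fun s => sub_le_iff_le_add'.1 (abs_sub_le_iff.1 (h s)).2) s a1 a2⟩

variable [Fintype A1] [Fintype A2]

def bellman (R : S → A1 → A2 → ℝ) (P : S → A1 → A2 → S → ℝ) (γ : ℝ)
    (π1 : S → A1 → ℝ) (π2 : S → A2 → ℝ) (V : S → ℝ) (s : S) : ℝ :=
  payoff (Qf R P γ V s) (π1 s) (π2 s)

variable {π1 : S → A1 → ℝ} {π2 : S → A2 → ℝ} {V W : S → ℝ} {δ : ℝ}

lemma IsValue.eq_bellman (hW : IsValue R P γ π1 π2 W) (s : S) :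
    W s = bellman R P γ π1 π2 W s :=
  hW s

lemma bellman_le_bellman_add (hP : IsKernel P) (hγ0 : 0 ≤ γ) (hπ1 : IsPolicy π1)
    (hπ2 : IsPolicy π2) {c : ℝ} (h : ∀ s, V s ≤ W s + c) (s : S) :
    bellman R P γ π1 π2 V s ≤ bellman R P γ π1 π2 W s + γ * c :=
  payoff_le_payoff_add (hπ1.mem_stdSimplex s) (hπ2.mem_stdSimplex s) (Qf_le_Qf_add hP hγ0 h s)

namespace IsValue

variable (hW : IsValue R P γ π1 π2 W) (hP : IsKernel P) (hγ0 : 0 ≤ γ) (hγ1 : γ < 1)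
  (hπ1 : IsPolicy π1) (hπ2 : IsPolicy π2)
include hW hP hγ0 hγ1 hπ1 hπ2

lemma le_add_of_bellman_le (hV : ∀ s, bellman R P γ π1 π2 V s ≤ V s + δ) (s : S) :
    W s ≤ V s + δ / (1 - γ) := by
  suffices W s - V s ≤ δ / (1 - γ) by linarith
  refine le_div_one_sub_of_le_add_mul (u := fun s => W s - V s) hγ1 (fun c hc s => ?_) s
  have := bellman_le_bellman_add (R := R) hP hγ0 hπ1 hπ2 (V := W) (W := V) (c := c)
    (fun s => by linarith [hc s]) s
  linarith [hW.eq_bellman s, hV s]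

lemma le_add_of_le_bellman (hV : ∀ s, V s ≤ bellman R P γ π1 π2 V s + δ) (s : S) :
    V s ≤ W s + δ / (1 - γ) := by
  suffices V s - W s ≤ δ / (1 - γ) by linarith
  refine le_div_one_sub_of_le_add_mul (u := fun s => V s - W s) hγ1 (fun c hc s => ?_) s
  have := bellman_le_bellman_add (R := R) hP hγ0 hπ1 hπ2 (V := V) (W := W) (c := c)
    (fun s => by linarith [hc s]) s
  linarith [hW.eq_bellman s, hV s]

lemma bellman_le_of_le (hWV : ∀ s, W s ≤ V s) (hV : ∀ s, V s ≤ bellman R P γ π1 π2 V s)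
    (s : S) : bellman R P γ π1 π2 V s ≤ V s := by
  have hVW : ∀ s, V s ≤ W s + 0 := fun s => by
    simpa using hW.le_add_of_le_bellman hP hγ0 hγ1 hπ1 hπ2 (δ := 0) (by simpa using hV) s
  linarith [bellman_le_bellman_add (R := R) hP hγ0 hπ1 hπ2 hVW s, hW.eq_bellman s, hWV s]

lemma le_bellman_of_le (hVW : ∀ s, V s ≤ W s) (hV : ∀ s, bellman R P γ π1 π2 V s ≤ V s)
    (s : S) : V s ≤ bellman R P γ π1 π2 V s := by
  have hWV : ∀ s, W s ≤ V s + 0 := fun s => by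
    simpa using hW.le_add_of_bellman_le hP hγ0 hγ1 hπ1 hπ2 (δ := 0) (by simpa using hV) s
  linarith [bellman_le_bellman_add (R := R) hP hγ0 hπ1 hπ2 hWV s, hW.eq_bellman s, hVW s]

lemma le_add_of_isSaddlePoint {M : S → A1 → A2 → ℝ} {p : S → A1 → ℝ} {v : S → ℝ} {η : ℝ}
    (hM : ∀ s, IsSaddlePoint (M s) (p s) (π2 s) (v s))
    (hQ : ∀ s a1 a2, |Qf R P γ V s a1 a2 - M s a1 a2| ≤ η) (hv : ∀ s, |V s - v s| ≤ η)
    (s : S) : W s ≤ V s + 2 * η / (1 - γ) :=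
  hW.le_add_of_bellman_le hP hγ0 hγ1 hπ1 hπ2 (fun s => by
    have := (hM s).payoff_le_add (hπ1.mem_stdSimplex s) (hQ s)
    unfold bellman
    linarith [(abs_sub_le_iff.1 (hv s)).2]) s

lemma add_le_of_isSaddlePoint {M : S → A1 → A2 → ℝ} {q : S → A2 → ℝ} {v : S → ℝ} {η : ℝ}
    (hM : ∀ s, IsSaddlePoint (M s) (π1 s) (q s) (v s))
    (hQ : ∀ s a1 a2, |Qf R P γ V s a1 a2 - M s a1 a2| ≤ η) (hv : ∀ s, |V s - v s| ≤ η)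
    (s : S) : V s ≤ W s + 2 * η / (1 - γ) :=
  hW.le_add_of_le_bellman hP hγ0 hγ1 hπ1 hπ2 (fun s => by
    have := (hM s).le_payoff_add (hπ2.mem_stdSimplex s) (hQ s)
    unfold bellman
    linarith [(abs_sub_le_iff.1 (hv s)).1]) s

end IsValue

end Bellman

namespace IsNash

variable {S A1 A2 : Type*} [Fintype S] [Fintype A1] [Fintype A2]
  {R : S → A1 → A2 → ℝ} {P : S → A1 → A2 → S → ℝ} {γ : ℝ}
  {Val : (S → A1 → ℝ) → (S → A2 → ℝ) → S → ℝ} {π1 : S → A1 → ℝ} {π2 : S → A2 → ℝ}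
  (hNash : IsNash Val π1 π2) (hVal : IsValueOperator R P γ Val)
  (hP : IsKernel P) (hγ0 : 0 ≤ γ) (hγ1 : γ < 1)
include hNash hVal hP hγ0 hγ1

-- Deviating to `p` at `s` only: a one-step gain would make the value of the deviation
-- dominate `Val π1 π2`, against the equilibrium property.
lemma payoff_le (s : S) {p : A1 → ℝ} (hp : p ∈ stdSimplex ℝ A1) :
    payoff (Qf R P γ (Val π1 π2) s) p (π2 s) ≤ Val π1 π2 s := by
  classical
  obtain ⟨hπ1, hπ2, hN⟩ := hNash
  set π1' := Function.update π1 s p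
  have hπ1' : IsPolicy π1' := hπ1.update s hp
  by_contra! hlt
  have hV : ∀ s', Val π1 π2 s' ≤ bellman R P γ π1' π2 (Val π1 π2) s' := by
    intro s'
    rcases eq_or_ne s' s with rfl | hs
    · simpa [bellman, π1'] using hlt.le
    · simpa [bellman, π1', Function.update_of_ne hs] using
        ((hVal π1 π2 hπ1 hπ2).eq_bellman s').le
  have := (hVal π1' π2 hπ1' hπ2).bellman_le_of_le hP hγ0 hγ1 hπ1' hπ2
    (fun s' => (hN s' π1' π2 hπ1' hπ2).2) hV s
  simp only [bellman, π1', Function.update_self] at this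
  linarith

lemma le_payoff (s : S) {q : A2 → ℝ} (hq : q ∈ stdSimplex ℝ A2) :
    Val π1 π2 s ≤ payoff (Qf R P γ (Val π1 π2) s) (π1 s) q := by
  classical
  obtain ⟨hπ1, hπ2, hN⟩ := hNash
  set π2' := Function.update π2 s q
  have hπ2' : IsPolicy π2' := hπ2.update s hq
  by_contra! hlt
  have hV : ∀ s', bellman R P γ π1 π2' (Val π1 π2) s' ≤ Val π1 π2 s' := by
    intro s'
    rcases eq_or_ne s' s with rfl | hs
    · simpa [bellman, π2'] using hlt.le
    · simpa [bellman, π2', Function.update_of_ne hs] using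
        ((hVal π1 π2 hπ1 hπ2).eq_bellman s').ge
  have := (hVal π1 π2' hπ1 hπ2').le_bellman_of_le hP hγ0 hγ1 hπ1 hπ2'
    (fun s' => (hN s' π1 π2' hπ1 hπ2').1) hV s
  simp only [bellman, π2', Function.update_self] at this
  linarith

lemma isSaddlePoint (s : S) :
    IsSaddlePoint (Qf R P γ (Val π1 π2) s) (π1 s) (π2 s) (Val π1 π2 s) where
  left_mem := hNash.1.mem_stdSimplex s
  right_mem := hNash.2.1.mem_stdSimplex s
  payoff_le _ hp := hNash.payoff_le hVal hP hγ0 hγ1 s hp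
  le_payoff _ hq := hNash.le_payoff hVal hP hγ0 hγ1 s hq

end IsNash

section Abstraction

variable {S SA A1 A2 : Type*} [Fintype S] [Fintype SA] [DecidableEq SA]
  {P : S → A1 → A2 → S → ℝ} {φ : S → SA} {w : S → ℝ}

lemma sum_PA_mul (VA : SA → ℝ) (sA : SA) (a1 : A1) (a2 : A2) :
    ∑ sA', PA P φ w sA a1 a2 sA' * VA sA' =
      ∑ g ∈ univ.filter (fun g => φ g = sA), w g * ∑ s', P g a1 a2 s' * VA (φ s') := by
  simp only [PA, sum_mul]
  rw [sum_comm]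
  refine sum_congr rfl fun g _ => ?_
  rw [mul_sum, ← sum_fiberwise univ φ]
  refine sum_congr rfl fun sA' _ => sum_congr rfl fun s' hs' => ?_
  rw [(mem_filter.1 hs').2]
  ring

lemma PA_isKernel (hP : IsKernel P) (hw : IsAggWeight φ w) : IsKernel (PA P φ w) := by
  refine ⟨fun sA a1 a2 sA' => sum_nonneg fun g _ => sum_nonneg fun s' _ =>
    mul_nonneg (hP.1 g a1 a2 s') (hw.1 g).1, fun sA a1 a2 => ?_⟩
  have := sum_PA_mul (P := P) (φ := φ) (w := w) (fun _ => 1) sA a1 a2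
  simp only [mul_one, hP.2] at this
  rw [this, hw.2 sA]

lemma Qf_RA_PA (R : S → A1 → A2 → ℝ) (γ : ℝ) (VA : SA → ℝ) (sA : SA) (a1 : A1) (a2 : A2) :
    Qf (RA R φ w) (PA P φ w) γ VA sA a1 a2 =
      ∑ g ∈ univ.filter (fun g => φ g = sA), w g * Qf R P γ (fun s => VA (φ s)) g a1 a2 := by
  rw [Qf, RA, sum_PA_mul, mul_sum, ← sum_add_distrib]
  exact sum_congr rfl fun g _ => by rw [Qf]; ring

lemma abs_Qf_sub_Qf_RA_PA_le {R : S → A1 → A2 → ℝ} {γ ε c : ℝ} {V : S → ℝ} {VA : SA → ℝ}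
    (hP : IsKernel P) (hγ0 : 0 ≤ γ) (hw : IsAggWeight φ w)
    (hQ : ∀ s1 s2, φ s1 = φ s2 → ∀ a1 a2, |Qf R P γ V s1 a1 a2 - Qf R P γ V s2 a1 a2| ≤ ε)
    (hc : ∀ s, |V s - VA (φ s)| ≤ c) (s : S) (a1 : A1) (a2 : A2) :
    |Qf R P γ V s a1 a2 - Qf (RA R φ w) (PA P φ w) γ VA (φ s) a1 a2| ≤ ε + γ * c := by
  have hconst : Qf R P γ V s a1 a2 =
      ∑ g ∈ univ.filter (fun g => φ g = φ s), w g * Qf R P γ V s a1 a2 := by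
    rw [← sum_mul, hw.2, one_mul]
  rw [Qf_RA_PA, hconst]
  refine abs_sum_mul_sub_sum_mul_le (fun g _ => (hw.1 g).1) (hw.2 _) fun g hg => ?_
  calc |Qf R P γ V s a1 a2 - Qf R P γ (fun s => VA (φ s)) g a1 a2|
      ≤ |Qf R P γ V s a1 a2 - Qf R P γ V g a1 a2|
        + |Qf R P γ V g a1 a2 - Qf R P γ (fun s => VA (φ s)) g a1 a2| := abs_sub_le _ _ _
    _ ≤ ε + γ * c :=
      add_le_add (hQ s g (mem_filter.1 hg).2.symm a1 a2) (abs_Qf_sub_Qf_le hP hγ0 hc g a1 a2)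

end Abstraction

theorem abs_value_sub_abstractValue_le {S SA A1 A2 : Type*} [Fintype S] [Fintype SA]
    [DecidableEq SA] [Fintype A1] [Fintype A2]
    {P : S → A1 → A2 → S → ℝ} {R : S → A1 → A2 → ℝ} {γ ε : ℝ}
    (hP : IsKernel P) (hγ0 : 0 ≤ γ) (hγ1 : γ < 1)
    {Val : (S → A1 → ℝ) → (S → A2 → ℝ) → S → ℝ} (hVal : IsValueOperator R P γ Val)
    {φ : S → SA} {w : S → ℝ} (hw : IsAggWeight φ w)
    {ValA : (SA → A1 → ℝ) → (SA → A2 → ℝ) → SA → ℝ}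
    (hValA : IsValueOperator (RA R φ w) (PA P φ w) γ ValA)
    {πA1 : SA → A1 → ℝ} {πA2 : SA → A2 → ℝ} (hNashA : IsNash ValA πA1 πA2)
    {π1 : S → A1 → ℝ} {π2 : S → A2 → ℝ} (hNash : IsNash Val π1 π2)
    (hagg : ∀ s1 s2 : S, φ s1 = φ s2 → ∀ (a1 : A1) (a2 : A2),
      |Qf R P γ (Val π1 π2) s1 a1 a2 - Qf R P γ (Val π1 π2) s2 a1 a2| ≤ ε)
    (s : S) : |Val π1 π2 s - ValA πA1 πA2 (φ s)| ≤ ε / (1 - γ) :=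
  le_div_one_sub_of_le_add_mul (u := fun s => |Val π1 π2 s - ValA πA1 πA2 (φ s)|) hγ1
    (fun _ hc s => (hNash.isSaddlePoint hVal hP hγ0 hγ1 s).abs_sub_le
      (hNashA.isSaddlePoint hValA (PA_isKernel hP hw) hγ0 hγ1 (φ s))
      (abs_Qf_sub_Qf_RA_PA_le hP hγ0 hw hagg hc s)) s

theorem duality_gap_bound_minimax_value_abstraction_general
    {S SA A1 A2 : Type*}
    [Fintype S] [Fintype SA] [DecidableEq SA]
    [Fintype A1] [Fintype A2]
    (P : S → A1 → A2 → S → ℝ) (R : S → A1 → A2 → ℝ) (γ : ℝ)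
    (hP : IsKernel P) (hγ0 : 0 ≤ γ) (hγ1 : γ < 1)
    (Val : (S → A1 → ℝ) → (S → A2 → ℝ) → S → ℝ)
    (hVal : IsValueOperator R P γ Val)
    (φ : S → SA)
    (w : S → ℝ) (hw : IsAggWeight φ w)
    (ValA : (SA → A1 → ℝ) → (SA → A2 → ℝ) → SA → ℝ)
    (hValA : IsValueOperator (RA R φ w) (PA P φ w) γ ValA)
    (πA1 : SA → A1 → ℝ) (πA2 : SA → A2 → ℝ)
    (hNashA : IsNash ValA πA1 πA2)
    (π1s : S → A1 → ℝ) (π2s : S → A2 → ℝ)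
    (hNash : IsNash Val π1s π2s)
    (ε : ℝ) (hε : 0 ≤ ε)
    (hagg : ∀ s1 s2 : S, φ s1 = φ s2 → ∀ (a1 : A1) (a2 : A2),
      |Qf R P γ (Val π1s π2s) s1 a1 a2 - Qf R P γ (Val π1s π2s) s2 a1 a2| ≤ ε)
    :
    ∀ s : S, ∀ (π1' : S → A1 → ℝ) (π2' : S → A2 → ℝ), IsPolicy π1' → IsPolicy π2' →
      Val π1' (fun s => πA2 (φ s)) s - Val (fun s => πA1 (φ s)) π2' s
        ≤ 12 * ε / (1 - γ) ^ 3 := by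
  intro s π1' π2' hπ1' hπ2'
  have hγ' : 0 < 1 - γ := sub_pos.2 hγ1
  have hV := abs_value_sub_abstractValue_le hP hγ0 hγ1 hVal hw hValA hNashA hNash hagg
  have hη : ε + γ * (ε / (1 - γ)) = ε / (1 - γ) := by field_simp; ring
  have hQ s a1 a2 := hη ▸ abs_Qf_sub_Qf_RA_PA_le hP hγ0 hw hagg hV s a1 a2
  have hA s := hNashA.isSaddlePoint hValA (PA_isKernel hP hw) hγ0 hγ1 (φ s)
  have hπA1 := hNashA.1.comp φ
  have hπA2 := hNashA.2.1.comp φ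
  have h1 := (hVal _ _ hπ1' hπA2).le_add_of_isSaddlePoint hP hγ0 hγ1 hπ1' hπA2 hA hQ hV s
  have h2 := (hVal _ _ hπA1 hπ2').add_le_of_isSaddlePoint hP hγ0 hγ1 hπA1 hπ2' hA hQ hV s
  have hgap : 2 * (2 * (ε / (1 - γ)) / (1 - γ)) ≤ 12 * ε / (1 - γ) ^ 3 := by
    rw [show 2 * (2 * (ε / (1 - γ)) / (1 - γ)) = 4 * ε * (1 - γ) / (1 - γ) ^ 3 by
      field_simp; ring]
    gcongr ?_ / _
    nlinarith
  linarith

theorem duality_gap_bound_minimax_value_abstraction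
    {S SA A1 A2 : Type*}
    [Fintype S] [Nonempty S] [Fintype SA] [DecidableEq SA]
    [Fintype A1] [Nonempty A1] [Fintype A2] [Nonempty A2]
    (P : S → A1 → A2 → S → ℝ) (R : S → A1 → A2 → ℝ) (γ : ℝ)
    (hP : IsKernel P) (hR : IsReward R) (hγ0 : 0 ≤ γ) (hγ1 : γ < 1)
    (Val : (S → A1 → ℝ) → (S → A2 → ℝ) → S → ℝ)
    (hVal : IsValueOperator R P γ Val)
    (φ : S → SA) (hφ : Function.Surjective φ)
    (w : S → ℝ) (hw : IsAggWeight φ w)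
    (ValA : (SA → A1 → ℝ) → (SA → A2 → ℝ) → SA → ℝ)
    (hValA : IsValueOperator (RA R φ w) (PA P φ w) γ ValA)
    (πA1 : SA → A1 → ℝ) (πA2 : SA → A2 → ℝ)
    (hNashA : IsNash ValA πA1 πA2)
    (π1s : S → A1 → ℝ) (π2s : S → A2 → ℝ)
    (hNash : IsNash Val π1s π2s)
    (ε : ℝ) (hε : 0 ≤ ε)
    (hagg : ∀ s1 s2 : S, φ s1 = φ s2 → ∀ (a1 : A1) (a2 : A2),
      |Qf R P γ (Val π1s π2s) s1 a1 a2 - Qf R P γ (Val π1s π2s) s2 a1 a2| ≤ ε)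
    :
    ∀ s : S, ∀ (π1' : S → A1 → ℝ) (π2' : S → A2 → ℝ), IsPolicy π1' → IsPolicy π2' →
      Val π1' (fun s => πA2 (φ s)) s - Val (fun s => πA1 (φ s)) π2' s
        ≤ 12 * ε / (1 - γ) ^ 3 :=
  duality_gap_bound_minimax_value_abstraction_general P R γ hP hγ0 hγ1 Val hVal φ w hw ValA hValA
    πA1 πA2 hNashA π1s π2s hNash ε hε hagg
end

section
/- Suppose the aggregation map φ satisfies: φ(s1) = φ(s2) implies |Q*(s1, a) − Q*(s2, a)| ≤ ε for all a ∈ A1×A2, for some ε ≥ 0. Then for every s ∈ S and every a ∈ A1×A2, |Q_A^{π_A*}(φ(s), a) − Q*(s, a)| ≤ ε/(1−γ). -/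
open Finset

section Aux

open Finset

variable {ι : Type*}

private lemma avg_le' (t : Finset ι) (p f : ι → ℝ) (hp : ∀ i ∈ t, 0 ≤ p i)
    (hp1 : ∑ i ∈ t, p i = 1) (B : ℝ) (hf : ∀ i ∈ t, f i ≤ B) :
    ∑ i ∈ t, p i * f i ≤ B := by
  calc ∑ i ∈ t, p i * f i ≤ ∑ i ∈ t, p i * B := by
        apply Finset.sum_le_sum
        intro i hi
        exact mul_le_mul_of_nonneg_left (hf i hi) (hp i hi)
    _ = B := by rw [← Finset.sum_mul, hp1, one_mul]

private lemma le_avg' (t : Finset ι) (p f : ι → ℝ) (hp : ∀ i ∈ t, 0 ≤ p i)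
    (hp1 : ∑ i ∈ t, p i = 1) (B : ℝ) (hf : ∀ i ∈ t, B ≤ f i) :
    B ≤ ∑ i ∈ t, p i * f i := by
  have := avg_le' t p (fun i => -f i) hp hp1 (-B) (fun i hi => neg_le_neg (hf i hi))
  simp only [mul_neg, Finset.sum_neg_distrib] at this
  linarith

private lemma avg2_le {A1 A2 : Type*} [Fintype A1] [Fintype A2]
    (p : A1 → ℝ) (q : A2 → ℝ) (hp : ∀ a, 0 ≤ p a) (hp1 : ∑ a, p a = 1)
    (hq : ∀ a, 0 ≤ q a) (hq1 : ∑ a, q a = 1)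
    (f : A1 → A2 → ℝ) (B : ℝ) (hf : ∀ a1 a2, f a1 a2 ≤ B) :
    ∑ a1, ∑ a2, p a1 * q a2 * f a1 a2 ≤ B := by
  have e : ∀ a1, ∑ a2, p a1 * q a2 * f a1 a2 = p a1 * ∑ a2, q a2 * f a1 a2 := by
    intro a1; rw [Finset.mul_sum]; congr 1; ext a2; ring
  simp only [e]
  exact avg_le' univ p _ (fun i _ => hp i) hp1 B
    (fun a1 _ => avg_le' univ q _ (fun i _ => hq i) hq1 B (fun a2 _ => hf a1 a2))

private lemma Qf_sub {S A1 A2 : Type*} [Fintype S]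
    (R : S → A1 → A2 → ℝ) (P : S → A1 → A2 → S → ℝ) (γ : ℝ) (V W : S → ℝ)
    (s : S) (a1 : A1) (a2 : A2) :
    Qf R P γ V s a1 a2 - Qf R P γ W s a1 a2
      = γ * ∑ s', P s a1 a2 s' * (V s' - W s') := by
  simp only [Qf, mul_sub, Finset.sum_sub_distrib]
  ring

/-- One-step deviation bound for player 1 at a Nash equilibrium. -/
private lemma nash_br1 {S A1 A2 : Type*} [Fintype S] [Nonempty S] [Fintype A1] [Fintype A2]
    {R : S → A1 → A2 → ℝ} {P : S → A1 → A2 → S → ℝ} {γ : ℝ}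
    (hP : IsKernel P) (hγ0 : 0 ≤ γ) (hγ1 : γ < 1)
    {Val : (S → A1 → ℝ) → (S → A2 → ℝ) → S → ℝ}
    (hVal : IsValueOperator R P γ Val)
    {π1 : S → A1 → ℝ} {π2 : S → A2 → ℝ} (hN : IsNash Val π1 π2)
    (s0 : S) (b1 : A1) :
    ∑ a2, π2 s0 a2 * Qf R P γ (Val π1 π2) s0 b1 a2 ≤ Val π1 π2 s0 := by
  classical
  obtain ⟨hπ1, hπ2, hne⟩ := hN
  set V := Val π1 π2 with hVdef
  have hV : IsValue R P γ π1 π2 V := hVal π1 π2 hπ1 hπ2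
  by_contra hcon
  push_neg at hcon
  set π1' : S → A1 → ℝ :=
    fun t a => if t = s0 then (if a = b1 then 1 else 0) else π1 t a with hπ1'def
  have hπ1' : IsPolicy π1' := by
    constructor
    · intro s a
      dsimp only [π1']
      split
      · split <;> norm_num
      · exact hπ1.1 s a
    · intro s
      dsimp only [π1']
      split
      · simp
      · exact hπ1.2 s
  set W := Val π1' π2 with hWdef
  have hW : IsValue R P γ π1' π2 W := hVal π1' π2 hπ1' hπ2
  have hWle : ∀ t, W t ≤ V t := fun t => (hne t π1' π2 hπ1' hπ2).2
  obtain ⟨t0, -, ht0⟩ := Finset.exists_max_image (univ : Finset S)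
    (fun t => V t - W t) univ_nonempty
  set M := V t0 - W t0 with hM
  have ht0' : ∀ t, V t - W t ≤ M := fun t => ht0 t (mem_univ t)
  have hM0 : 0 ≤ M := le_trans (by linarith [hWle s0]) (ht0' s0)
  have hQd : ∀ t a1 a2, Qf R P γ V t a1 a2 - Qf R P γ W t a1 a2 ≤ γ * M := by
    intro t a1 a2
    rw [Qf_sub]
    have h1 : ∑ s', P t a1 a2 s' * (V s' - W s') ≤ M :=
      avg_le' univ _ _ (fun i _ => hP.1 t a1 a2 i) (hP.2 t a1 a2) M (fun i _ => ht0' i)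
    exact mul_le_mul_of_nonneg_left h1 hγ0
  have hDt : ∀ t, t ≠ s0 → V t - W t ≤ γ * M := by
    intro t ht
    have e1 : V t - W t
        = ∑ a1, ∑ a2, π1 t a1 * π2 t a2 * (Qf R P γ V t a1 a2 - Qf R P γ W t a1 a2) := by
      conv_lhs => rw [hV t, hW t]
      simp only [π1', if_neg ht, mul_sub, Finset.sum_sub_distrib]
    rw [e1]
    exact avg2_le (π1 t) (π2 t) (hπ1.1 t) (hπ1.2 t) (hπ2.1 t) (hπ2.2 t) _ _
      (fun a1 a2 => hQd t a1 a2)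
  have e2 : W s0 = ∑ a2, π2 s0 a2 * Qf R P γ W s0 b1 a2 := by
    rw [hW s0, Finset.sum_eq_single b1]
    · simp [π1']
    · intro a1 _ hne1
      simp [π1', hne1]
    · intro h; exact absurd (mem_univ b1) h
  have hDs0 : V s0 - W s0 ≤ (V s0 - ∑ a2, π2 s0 a2 * Qf R P γ V s0 b1 a2) + γ * M := by
    have e3 : V s0 - W s0 = (V s0 - ∑ a2, π2 s0 a2 * Qf R P γ V s0 b1 a2)
        + ∑ a2, π2 s0 a2 * (Qf R P γ V s0 b1 a2 - Qf R P γ W s0 b1 a2) := by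
      rw [e2]
      simp only [mul_sub, Finset.sum_sub_distrib]
      ring
    rw [e3]
    have h4 : ∑ a2, π2 s0 a2 * (Qf R P γ V s0 b1 a2 - Qf R P γ W s0 b1 a2) ≤ γ * M :=
      avg_le' univ _ _ (fun i _ => hπ2.1 s0 i) (hπ2.2 s0) _ (fun a2 _ => hQd s0 b1 a2)
    linarith
  by_cases hts : t0 = s0
  · rw [hts] at hM
    nlinarith [mul_nonneg (by linarith : (0:ℝ) ≤ 1 - γ) hM0]
  · have h5 : M ≤ γ * M := hM ▸ hDt t0 hts
    have h6 : M ≤ 0 := by nlinarith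
    have h7 : (0:ℝ) ≤ V s0 - W s0 := by linarith [hWle s0]
    nlinarith [mul_nonneg hγ0 hM0]

/-- One-step deviation bound for player 2 at a Nash equilibrium. -/
private lemma nash_br2 {S A1 A2 : Type*} [Fintype S] [Nonempty S] [Fintype A1] [Fintype A2]
    {R : S → A1 → A2 → ℝ} {P : S → A1 → A2 → S → ℝ} {γ : ℝ}
    (hP : IsKernel P) (hγ0 : 0 ≤ γ) (hγ1 : γ < 1)
    {Val : (S → A1 → ℝ) → (S → A2 → ℝ) → S → ℝ}
    (hVal : IsValueOperator R P γ Val)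
    {π1 : S → A1 → ℝ} {π2 : S → A2 → ℝ} (hN : IsNash Val π1 π2)
    (s0 : S) (b2 : A2) :
    Val π1 π2 s0 ≤ ∑ a1, π1 s0 a1 * Qf R P γ (Val π1 π2) s0 a1 b2 := by
  classical
  obtain ⟨hπ1, hπ2, hne⟩ := hN
  set V := Val π1 π2 with hVdef
  have hV : IsValue R P γ π1 π2 V := hVal π1 π2 hπ1 hπ2
  by_contra hcon
  push_neg at hcon
  set π2' : S → A2 → ℝ :=
    fun t a => if t = s0 then (if a = b2 then 1 else 0) else π2 t a with hπ2'def
  have hπ2' : IsPolicy π2' := by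
    constructor
    · intro s a
      dsimp only [π2']
      split
      · split <;> norm_num
      · exact hπ2.1 s a
    · intro s
      dsimp only [π2']
      split
      · simp
      · exact hπ2.2 s
  set W := Val π1 π2' with hWdef
  have hW : IsValue R P γ π1 π2' W := hVal π1 π2' hπ1 hπ2'
  have hWge : ∀ t, V t ≤ W t := fun t => (hne t π1 π2' hπ1 hπ2').1
  obtain ⟨t0, -, ht0⟩ := Finset.exists_max_image (univ : Finset S)
    (fun t => W t - V t) univ_nonempty
  set M := W t0 - V t0 with hM
  have ht0' : ∀ t, W t - V t ≤ M := fun t => ht0 t (mem_univ t)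
  have hM0 : 0 ≤ M := le_trans (by linarith [hWge s0]) (ht0' s0)
  have hQd : ∀ t a1 a2, Qf R P γ W t a1 a2 - Qf R P γ V t a1 a2 ≤ γ * M := by
    intro t a1 a2
    rw [Qf_sub]
    have h1 : ∑ s', P t a1 a2 s' * (W s' - V s') ≤ M :=
      avg_le' univ _ _ (fun i _ => hP.1 t a1 a2 i) (hP.2 t a1 a2) M (fun i _ => ht0' i)
    exact mul_le_mul_of_nonneg_left h1 hγ0
  have hDt : ∀ t, t ≠ s0 → W t - V t ≤ γ * M := by
    intro t ht
    have e1 : W t - V t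
        = ∑ a1, ∑ a2, π1 t a1 * π2 t a2 * (Qf R P γ W t a1 a2 - Qf R P γ V t a1 a2) := by
      conv_lhs => rw [hW t, hV t]
      simp only [π2', if_neg ht, mul_sub, Finset.sum_sub_distrib]
    rw [e1]
    exact avg2_le (π1 t) (π2 t) (hπ1.1 t) (hπ1.2 t) (hπ2.1 t) (hπ2.2 t) _ _
      (fun a1 a2 => hQd t a1 a2)
  have e2 : W s0 = ∑ a1, π1 s0 a1 * Qf R P γ W s0 a1 b2 := by
    rw [hW s0]
    apply Finset.sum_congr rfl
    intro a1 _
    rw [Finset.sum_eq_single b2]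
    · simp [π2']
    · intro a2 _ hne2
      simp [π2', hne2]
    · intro h; exact absurd (mem_univ b2) h
  have hDs0 : W s0 - V s0 ≤ ((∑ a1, π1 s0 a1 * Qf R P γ V s0 a1 b2) - V s0) + γ * M := by
    have e3 : W s0 - V s0 = ((∑ a1, π1 s0 a1 * Qf R P γ V s0 a1 b2) - V s0)
        + ∑ a1, π1 s0 a1 * (Qf R P γ W s0 a1 b2 - Qf R P γ V s0 a1 b2) := by
      rw [e2]
      simp only [mul_sub, Finset.sum_sub_distrib]
      ring
    rw [e3]
    have h4 : ∑ a1, π1 s0 a1 * (Qf R P γ W s0 a1 b2 - Qf R P γ V s0 a1 b2) ≤ γ * M :=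
      avg_le' univ _ _ (fun i _ => hπ1.1 s0 i) (hπ1.2 s0) _ (fun a1 _ => hQd s0 a1 b2)
    linarith
  by_cases hts : t0 = s0
  · rw [hts] at hM
    nlinarith [mul_nonneg (by linarith : (0:ℝ) ≤ 1 - γ) hM0]
  · have h5 : M ≤ γ * M := hM ▸ hDt t0 hts
    have h6 : M ≤ 0 := by nlinarith
    have h7 : (0:ℝ) ≤ W s0 - V s0 := by linarith [hWge s0]
    nlinarith [mul_nonneg hγ0 hM0]

/-- Mixed version of `nash_br1`: any mixed one-step deviation of player 1. -/
private lemma nash_mix1 {S A1 A2 : Type*} [Fintype S] [Nonempty S] [Fintype A1] [Fintype A2]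
    {R : S → A1 → A2 → ℝ} {P : S → A1 → A2 → S → ℝ} {γ : ℝ}
    (hP : IsKernel P) (hγ0 : 0 ≤ γ) (hγ1 : γ < 1)
    {Val : (S → A1 → ℝ) → (S → A2 → ℝ) → S → ℝ}
    (hVal : IsValueOperator R P γ Val)
    {π1 : S → A1 → ℝ} {π2 : S → A2 → ℝ} (hN : IsNash Val π1 π2)
    (s0 : S) (p : A1 → ℝ) (hp : ∀ a, 0 ≤ p a) (hp1 : ∑ a, p a = 1) :
    ∑ a1, ∑ a2, p a1 * π2 s0 a2 * Qf R P γ (Val π1 π2) s0 a1 a2 ≤ Val π1 π2 s0 := by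
  have e : ∀ a1, ∑ a2, p a1 * π2 s0 a2 * Qf R P γ (Val π1 π2) s0 a1 a2
      = p a1 * ∑ a2, π2 s0 a2 * Qf R P γ (Val π1 π2) s0 a1 a2 := by
    intro a1; rw [Finset.mul_sum]; congr 1; ext a2; ring
  simp only [e]
  exact avg_le' univ p _ (fun i _ => hp i) hp1 _
    (fun a1 _ => nash_br1 hP hγ0 hγ1 hVal ⟨hN.1, hN.2.1, hN.2.2⟩ s0 a1)

/-- Mixed version of `nash_br2`: any mixed one-step deviation of player 2. -/
private lemma nash_mix2 {S A1 A2 : Type*} [Fintype S] [Nonempty S] [Fintype A1] [Fintype A2]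
    {R : S → A1 → A2 → ℝ} {P : S → A1 → A2 → S → ℝ} {γ : ℝ}
    (hP : IsKernel P) (hγ0 : 0 ≤ γ) (hγ1 : γ < 1)
    {Val : (S → A1 → ℝ) → (S → A2 → ℝ) → S → ℝ}
    (hVal : IsValueOperator R P γ Val)
    {π1 : S → A1 → ℝ} {π2 : S → A2 → ℝ} (hN : IsNash Val π1 π2)
    (s0 : S) (q : A2 → ℝ) (hq : ∀ a, 0 ≤ q a) (hq1 : ∑ a, q a = 1) :
    Val π1 π2 s0 ≤ ∑ a1, ∑ a2, π1 s0 a1 * q a2 * Qf R P γ (Val π1 π2) s0 a1 a2 := by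
  rw [Finset.sum_comm]
  have e : ∀ a2, ∑ a1, π1 s0 a1 * q a2 * Qf R P γ (Val π1 π2) s0 a1 a2
      = q a2 * ∑ a1, π1 s0 a1 * Qf R P γ (Val π1 π2) s0 a1 a2 := by
    intro a2; rw [Finset.mul_sum]; congr 1; ext a1; ring
  simp only [e]
  exact le_avg' univ q _ (fun i _ => hq i) hq1 _
    (fun a2 _ => nash_br2 hP hγ0 hγ1 hVal ⟨hN.1, hN.2.1, hN.2.2⟩ s0 a2)

end Aux

theorem abstract_Q_close_to_ground_minimax_Q
    {S SA A1 A2 : Type*}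
    [Fintype S] [Nonempty S] [Fintype SA] [DecidableEq SA]
    [Fintype A1] [Nonempty A1] [Fintype A2] [Nonempty A2]
    (P : S → A1 → A2 → S → ℝ) (R : S → A1 → A2 → ℝ) (γ : ℝ)
    (hP : IsKernel P) (hR : IsReward R) (hγ0 : 0 ≤ γ) (hγ1 : γ < 1)
    (Val : (S → A1 → ℝ) → (S → A2 → ℝ) → S → ℝ)
    (hVal : IsValueOperator R P γ Val)
    (φ : S → SA) (hφ : Function.Surjective φ)
    (w : S → ℝ) (hw : IsAggWeight φ w)
    (ValA : (SA → A1 → ℝ) → (SA → A2 → ℝ) → SA → ℝ)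
    (hValA : IsValueOperator (RA R φ w) (PA P φ w) γ ValA)
    (πA1 : SA → A1 → ℝ) (πA2 : SA → A2 → ℝ)
    (hNashA : IsNash ValA πA1 πA2)
    (π1s : S → A1 → ℝ) (π2s : S → A2 → ℝ)
    (hNash : IsNash Val π1s π2s)
    (ε : ℝ) (hε : 0 ≤ ε)
    (hagg : ∀ s1 s2 : S, φ s1 = φ s2 → ∀ (a1 : A1) (a2 : A2),
      |Qf R P γ (Val π1s π2s) s1 a1 a2 - Qf R P γ (Val π1s π2s) s2 a1 a2| ≤ ε)
    :
    ∀ (s : S) (a1 : A1) (a2 : A2),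
      |Qf (RA R φ w) (PA P φ w) γ (ValA πA1 πA2) (φ s) a1 a2 - Qf R P γ (Val π1s π2s) s a1 a2| ≤ ε / (1 - γ) := by
  classical
  haveI : Nonempty SA := ⟨φ (Classical.arbitrary S)⟩
  -- The abstract transition function is a kernel.
  have hwpos : ∀ g, 0 ≤ w g := fun g => (hw.1 g).1
  have hPA : IsKernel (PA P φ w) := by
    constructor
    · intro sA a1 a2 sA'
      apply Finset.sum_nonneg; intro g _
      apply Finset.sum_nonneg; intro s' _
      exact mul_nonneg (hP.1 g a1 a2 s') (hwpos g)
    · intro sA a1 a2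
      unfold PA
      rw [Finset.sum_comm]
      have e : ∀ g, ∑ sA' : SA, ∑ s' ∈ univ.filter (fun s' => φ s' = sA'),
          P g a1 a2 s' * w g = w g := by
        intro g
        rw [Finset.sum_fiberwise univ φ (fun s' => P g a1 a2 s' * w g),
          ← Finset.sum_mul, hP.2 g a1 a2, one_mul]
      rw [Finset.sum_congr rfl (fun g _ => e g)]
      exact hw.2 sA
  set V : S → ℝ := Val π1s π2s with hVdef
  set VA : SA → ℝ := ValA πA1 πA2 with hVAdef
  set Qs : S → A1 → A2 → ℝ := Qf R P γ V with hQsdef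
  set QA : SA → A1 → A2 → ℝ := Qf (RA R φ w) (PA P φ w) γ VA with hQAdef
  -- the maximal gap
  obtain ⟨m, -, hm⟩ := Finset.exists_max_image (univ : Finset (S × A1 × A2))
    (fun x => |QA (φ x.1) x.2.1 x.2.2 - Qs x.1 x.2.1 x.2.2|) univ_nonempty
  set Δ : ℝ := |QA (φ m.1) m.2.1 m.2.2 - Qs m.1 m.2.1 m.2.2| with hΔdef
  have hΔ : ∀ s a1 a2, |QA (φ s) a1 a2 - Qs s a1 a2| ≤ Δ :=
    fun s a1 a2 => hm (s, a1, a2) (Finset.mem_univ _)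
  have hΔ0 : 0 ≤ Δ := abs_nonneg _
  -- closeness of the value functions
  have hVD : ∀ s', |VA (φ s') - V s'| ≤ Δ := by
    intro s'
    rw [abs_le]
    constructor
    · -- V s' - VA (φ s') ≤ Δ
      have h1 : V s' ≤ ∑ a1, ∑ a2, π1s s' a1 * πA2 (φ s') a2 * Qs s' a1 a2 :=
        nash_mix2 hP hγ0 hγ1 hVal hNash s' (πA2 (φ s'))
          (hNashA.2.1.1 (φ s')) (hNashA.2.1.2 (φ s'))
      have h2 : ∑ a1, ∑ a2, π1s s' a1 * πA2 (φ s') a2 * QA (φ s') a1 a2 ≤ VA (φ s') :=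
        nash_mix1 hPA hγ0 hγ1 hValA hNashA (φ s') (π1s s')
          (hNash.1.1 s') (hNash.1.2 s')
      have h3 : ∑ a1, ∑ a2, π1s s' a1 * πA2 (φ s') a2 * Qs s' a1 a2
          - ∑ a1, ∑ a2, π1s s' a1 * πA2 (φ s') a2 * QA (φ s') a1 a2
          = ∑ a1, ∑ a2, π1s s' a1 * πA2 (φ s') a2 * (Qs s' a1 a2 - QA (φ s') a1 a2) := by
        simp only [mul_sub, Finset.sum_sub_distrib]
      have h4 : ∑ a1, ∑ a2, π1s s' a1 * πA2 (φ s') a2 * (Qs s' a1 a2 - QA (φ s') a1 a2) ≤ Δ :=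
        avg2_le _ _ (hNash.1.1 s') (hNash.1.2 s') (hNashA.2.1.1 (φ s')) (hNashA.2.1.2 (φ s'))
          _ _ (fun a1 a2 => by
            have := hΔ s' a1 a2
            rw [abs_sub_comm] at this
            exact le_trans (le_abs_self _) this)
      linarith
    · -- VA (φ s') - V s' ≤ Δ
      have h1 : VA (φ s') ≤ ∑ a1, ∑ a2, πA1 (φ s') a1 * π2s s' a2 * QA (φ s') a1 a2 :=
        nash_mix2 hPA hγ0 hγ1 hValA hNashA (φ s') (π2s s')
          (hNash.2.1.1 s') (hNash.2.1.2 s')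
      have h2 : ∑ a1, ∑ a2, πA1 (φ s') a1 * π2s s' a2 * Qs s' a1 a2 ≤ V s' :=
        nash_mix1 hP hγ0 hγ1 hVal hNash s' (πA1 (φ s'))
          (hNashA.1.1 (φ s')) (hNashA.1.2 (φ s'))
      have h3 : ∑ a1, ∑ a2, πA1 (φ s') a1 * π2s s' a2 * QA (φ s') a1 a2
          - ∑ a1, ∑ a2, πA1 (φ s') a1 * π2s s' a2 * Qs s' a1 a2
          = ∑ a1, ∑ a2, πA1 (φ s') a1 * π2s s' a2 * (QA (φ s') a1 a2 - Qs s' a1 a2) := by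
        simp only [mul_sub, Finset.sum_sub_distrib]
      have h4 : ∑ a1, ∑ a2, πA1 (φ s') a1 * π2s s' a2 * (QA (φ s') a1 a2 - Qs s' a1 a2) ≤ Δ :=
        avg2_le _ _ (hNashA.1.1 (φ s')) (hNashA.1.2 (φ s')) (hNash.2.1.1 s') (hNash.2.1.2 s')
          _ _ (fun a1 a2 => le_trans (le_abs_self _) (hΔ s' a1 a2))
      linarith
  -- key contraction bound
  have hkey : ∀ s a1 a2, |QA (φ s) a1 a2 - Qs s a1 a2| ≤ ε + γ * Δ := by
    intro s a1 a2
    set C : Finset S := univ.filter (fun g => φ g = φ s) with hCdef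
    have hwC : ∑ g ∈ C, w g = 1 := hw.2 (φ s)
    -- the abstract Q decomposes as a weighted average over the class
    have hdec : QA (φ s) a1 a2
        = ∑ g ∈ C, w g * Qf R P γ (fun s' => VA (φ s')) g a1 a2 := by
      show Qf (RA R φ w) (PA P φ w) γ VA (φ s) a1 a2 = _
      unfold Qf RA PA
      have e1 : ∑ sA' : SA, (∑ g ∈ C, ∑ s' ∈ univ.filter (fun s' => φ s' = sA'),
          P g a1 a2 s' * w g) * VA sA'
          = ∑ g ∈ C, ∑ s', P g a1 a2 s' * w g * VA (φ s') := by
        have e2 : ∀ sA' : SA, (∑ g ∈ C, ∑ s' ∈ univ.filter (fun s' => φ s' = sA'),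
            P g a1 a2 s' * w g) * VA sA'
            = ∑ g ∈ C, ∑ s' ∈ univ.filter (fun s' => φ s' = sA'),
              P g a1 a2 s' * w g * VA (φ s') := by
          intro sA'
          rw [Finset.sum_mul]
          apply Finset.sum_congr rfl
          intro g _
          rw [Finset.sum_mul]
          apply Finset.sum_congr rfl
          intro s' hs'
          rw [(Finset.mem_filter.mp hs').2]
        rw [Finset.sum_congr rfl (fun sA' _ => e2 sA'), Finset.sum_comm]
        apply Finset.sum_congr rfl
        intro g _
        exact Finset.sum_fiberwise univ φ (fun s' => P g a1 a2 s' * w g * VA (φ s'))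
      rw [e1, Finset.mul_sum, ← Finset.sum_add_distrib]
      apply Finset.sum_congr rfl
      intro g _
      rw [Finset.mul_sum, Finset.mul_sum]
      have e3 : ∀ s', γ * (P g a1 a2 s' * w g * VA (φ s'))
          = w g * (γ * (P g a1 a2 s' * VA (φ s'))) := fun s' => by ring
      rw [Finset.sum_congr rfl (fun s' _ => e3 s'), ← Finset.mul_sum, ← Finset.mul_sum]
      ring
    have hQfix : Qs s a1 a2 = ∑ g ∈ C, w g * Qs s a1 a2 := by
      rw [← Finset.sum_mul, hwC, one_mul]
    have hsplit : QA (φ s) a1 a2 - Qs s a1 a2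
        = ∑ g ∈ C, w g * (Qf R P γ (fun s' => VA (φ s')) g a1 a2 - Qs s a1 a2) := by
      rw [hdec]
      conv_lhs => rw [hQfix]
      simp only [mul_sub, Finset.sum_sub_distrib]
    rw [hsplit]
    calc |∑ g ∈ C, w g * (Qf R P γ (fun s' => VA (φ s')) g a1 a2 - Qs s a1 a2)|
        ≤ ∑ g ∈ C, |w g * (Qf R P γ (fun s' => VA (φ s')) g a1 a2 - Qs s a1 a2)| :=
          Finset.abs_sum_le_sum_abs _ _
      _ = ∑ g ∈ C, w g * |Qf R P γ (fun s' => VA (φ s')) g a1 a2 - Qs s a1 a2| := by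
          apply Finset.sum_congr rfl
          intro g _
          rw [abs_mul, abs_of_nonneg (hwpos g)]
      _ ≤ ε + γ * Δ := by
          apply avg_le' C w _ (fun g _ => hwpos g) hwC
          intro g hg
          have hφg : φ g = φ s := (Finset.mem_filter.mp hg).2
          have b1 : |Qf R P γ (fun s' => VA (φ s')) g a1 a2 - Qs g a1 a2| ≤ γ * Δ := by
            rw [Qf_sub]
            rw [abs_mul, abs_of_nonneg hγ0]
            apply mul_le_mul_of_nonneg_left _ hγ0
            calc |∑ s', P g a1 a2 s' * (VA (φ s') - V s')|
                ≤ ∑ s', |P g a1 a2 s' * (VA (φ s') - V s')| :=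
                  Finset.abs_sum_le_sum_abs _ _
              _ = ∑ s', P g a1 a2 s' * |VA (φ s') - V s'| := by
                  apply Finset.sum_congr rfl
                  intro s' _
                  rw [abs_mul, abs_of_nonneg (hP.1 g a1 a2 s')]
              _ ≤ Δ := avg_le' univ _ _ (fun i _ => hP.1 g a1 a2 i) (hP.2 g a1 a2) Δ
                  (fun s' _ => hVD s')
          have b2 : |Qs g a1 a2 - Qs s a1 a2| ≤ ε := hagg g s hφg a1 a2
          calc |Qf R P γ (fun s' => VA (φ s')) g a1 a2 - Qs s a1 a2|
              ≤ |Qf R P γ (fun s' => VA (φ s')) g a1 a2 - Qs g a1 a2|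
                + |Qs g a1 a2 - Qs s a1 a2| := abs_sub_le _ _ _
            _ ≤ ε + γ * Δ := by linarith
  -- solve the contraction inequality
  have hΔle : Δ ≤ ε + γ * Δ := hkey m.1 m.2.1 m.2.2
  have hfin : Δ ≤ ε / (1 - γ) := by
    rw [le_div_iff₀ (by linarith : (0:ℝ) < 1 - γ)]
    linarith
  intro s a1 a2
  exact le_trans (hΔ s a1 a2) hfin
end

section
/- Suppose the aggregation map φ satisfies the model-similarity condition: φ(s1) = φ(s2) implies, for all a ∈ A1×A2, |R(s1, a) − R(s2, a)| ≤ ε and max_{s_A' ∈ S_A} |Σ_{s' : φ(s')=s_A'} (P(s'|s1, a) − P(s'|s2, a))| ≤ ε, for some ε ≥ 0. Then for every s ∈ S and every a ∈ A1×A2, |Q^{π1†, π_GA,2*}(s, a) − Q_A^{π_A*}(φ(s), a)| ≤ ε(1 + γ(|S| − 1))/(1−γ)². -/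
open Finset

section Helpers

lemma wavg_le {ι : Type*} (t : Finset ι) (w f : ι → ℝ) {c : ℝ}
    (hw : ∀ i ∈ t, 0 ≤ w i) (hs : ∑ i ∈ t, w i = 1)
    (hf : ∀ i ∈ t, f i ≤ c) : ∑ i ∈ t, w i * f i ≤ c := by
  calc ∑ i ∈ t, w i * f i ≤ ∑ i ∈ t, w i * c :=
        Finset.sum_le_sum fun i hi => mul_le_mul_of_nonneg_left (hf i hi) (hw i hi)
    _ = c := by rw [← Finset.sum_mul, hs, one_mul]

lemma wavg_ge {ι : Type*} (t : Finset ι) (w f : ι → ℝ) {c : ℝ}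
    (hw : ∀ i ∈ t, 0 ≤ w i) (hs : ∑ i ∈ t, w i = 1)
    (hf : ∀ i ∈ t, c ≤ f i) : c ≤ ∑ i ∈ t, w i * f i := by
  calc c = ∑ i ∈ t, w i * c := by rw [← Finset.sum_mul, hs, one_mul]
    _ ≤ ∑ i ∈ t, w i * f i :=
        Finset.sum_le_sum fun i hi => mul_le_mul_of_nonneg_left (hf i hi) (hw i hi)

lemma abs_wavg_le {ι : Type*} (t : Finset ι) (w f : ι → ℝ) {c : ℝ}
    (hw : ∀ i ∈ t, 0 ≤ w i) (hs : ∑ i ∈ t, w i = 1)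
    (hf : ∀ i ∈ t, |f i| ≤ c) : |∑ i ∈ t, w i * f i| ≤ c := by
  have h1 : |∑ i ∈ t, w i * f i| ≤ ∑ i ∈ t, |w i * f i| := Finset.abs_sum_le_sum_abs _ _
  have h2 : ∑ i ∈ t, |w i * f i| = ∑ i ∈ t, w i * |f i| :=
    Finset.sum_congr rfl fun i hi => by rw [abs_mul, abs_of_nonneg (hw i hi)]
  refine h1.trans ?_
  rw [h2]
  exact wavg_le t w (fun i => |f i|) hw hs hf

lemma double_sum_factor {A1 A2 : Type*} [Fintype A1] [Fintype A2]
    (p : A1 → ℝ) (q : A2 → ℝ) (f : A1 → A2 → ℝ) :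
    ∑ a1, ∑ a2, p a1 * q a2 * f a1 a2 = ∑ a1, p a1 * ∑ a2, q a2 * f a1 a2 := by
  refine Finset.sum_congr rfl fun a1 _ => ?_
  rw [Finset.mul_sum]
  exact Finset.sum_congr rfl fun a2 _ => by ring

lemma double_wavg_le {A1 A2 : Type*} [Fintype A1] [Fintype A2]
    (p : A1 → ℝ) (q : A2 → ℝ) (f : A1 → A2 → ℝ) {c : ℝ}
    (hp : ∀ a, 0 ≤ p a) (hps : ∑ a, p a = 1)
    (hq : ∀ a, 0 ≤ q a) (hqs : ∑ a, q a = 1)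
    (hf : ∀ a1 a2, f a1 a2 ≤ c) :
    ∑ a1, ∑ a2, p a1 * q a2 * f a1 a2 ≤ c := by
  rw [double_sum_factor]
  exact wavg_le _ p _ (fun a _ => hp a) hps
    (fun a1 _ => wavg_le _ q _ (fun a _ => hq a) hqs (fun a2 _ => hf a1 a2))

lemma double_wavg_ge {A1 A2 : Type*} [Fintype A1] [Fintype A2]
    (p : A1 → ℝ) (q : A2 → ℝ) (f : A1 → A2 → ℝ) {c : ℝ}
    (hp : ∀ a, 0 ≤ p a) (hps : ∑ a, p a = 1)
    (hq : ∀ a, 0 ≤ q a) (hqs : ∑ a, q a = 1)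
    (hf : ∀ a1 a2, c ≤ f a1 a2) :
    c ≤ ∑ a1, ∑ a2, p a1 * q a2 * f a1 a2 := by
  rw [double_sum_factor]
  exact wavg_ge _ p _ (fun a _ => hp a) hps
    (fun a1 _ => wavg_ge _ q _ (fun a _ => hq a) hqs (fun a2 _ => hf a1 a2))

lemma wavg_add_const {ι : Type*} (t : Finset ι) (q f : ι → ℝ) (c : ℝ)
    (hs : ∑ i ∈ t, q i = 1) :
    ∑ i ∈ t, q i * (f i + c) = (∑ i ∈ t, q i * f i) + c := by
  have : ∑ i ∈ t, q i * (f i + c) = ∑ i ∈ t, (q i * f i + q i * c) :=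
    Finset.sum_congr rfl fun i _ => by ring
  rw [this, Finset.sum_add_distrib, ← Finset.sum_mul, hs, one_mul]

/-- Any Bellman value of a policy profile lies in `[0, 1/(1-γ)]`. -/
lemma value_bounds {S A1 A2 : Type*} [Fintype S] [Nonempty S] [Fintype A1] [Fintype A2]
    {R : S → A1 → A2 → ℝ} {P : S → A1 → A2 → S → ℝ} {γ : ℝ}
    (hP : IsKernel P) (hR : IsReward R) (hγ0 : 0 ≤ γ) (hγ1 : γ < 1)
    {π1 : S → A1 → ℝ} {π2 : S → A2 → ℝ} (h1 : IsPolicy π1) (h2 : IsPolicy π2)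
    {V : S → ℝ} (hV : IsValue R P γ π1 π2 V) :
    ∀ s, 0 ≤ V s ∧ V s ≤ 1 / (1 - γ) := by
  have h1γ : (0:ℝ) < 1 - γ := by linarith
  obtain ⟨s0, _, hs0⟩ := Finset.exists_max_image univ V univ_nonempty
  obtain ⟨s1, _, hs1⟩ := Finset.exists_min_image univ V univ_nonempty
  have hub : V s0 ≤ 1 + γ * V s0 := by
    conv_lhs => rw [hV s0]
    refine double_wavg_le _ _ _ (h1.1 s0) (h1.2 s0) (h2.1 s0) (h2.2 s0) ?_
    intro a1 a2
    unfold Qf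
    have hsum : ∑ s', P s0 a1 a2 s' * V s' ≤ V s0 := by
      have := wavg_le univ (P s0 a1 a2) V (fun s' _ => hP.1 s0 a1 a2 s')
        (hP.2 s0 a1 a2) (fun s' _ => hs0 s' (Finset.mem_univ s'))
      exact this
    have := (hR s0 a1 a2).2
    nlinarith [mul_le_mul_of_nonneg_left hsum hγ0]
  have hlb : γ * V s1 ≤ V s1 := by
    conv_rhs => rw [hV s1]
    refine double_wavg_ge _ _ _ (h1.1 s1) (h1.2 s1) (h2.1 s1) (h2.2 s1) ?_
    intro a1 a2
    unfold Qf
    have hsum : V s1 ≤ ∑ s', P s1 a1 a2 s' * V s' := by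
      exact wavg_ge univ (P s1 a1 a2) V (fun s' _ => hP.1 s1 a1 a2 s')
        (hP.2 s1 a1 a2) (fun s' _ => hs1 s' (Finset.mem_univ s'))
    have := (hR s1 a1 a2).1
    nlinarith [mul_le_mul_of_nonneg_left hsum hγ0]
  have hVmax : V s0 ≤ 1 / (1 - γ) := by
    rw [le_div_iff₀ h1γ]; nlinarith
  have hVmin : 0 ≤ V s1 := by nlinarith
  intro s
  exact ⟨hVmin.trans (hs1 s (Finset.mem_univ s)),
    (hs0 s (Finset.mem_univ s)).trans hVmax⟩

/-- The abstract reward is a reward. -/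
lemma RA_reward {S SA A1 A2 : Type*} [Fintype S] [DecidableEq SA]
    {R : S → A1 → A2 → ℝ} {φ : S → SA} {w : S → ℝ}
    (hR : IsReward R) (hw : IsAggWeight φ w) : IsReward (RA R φ w) := by
  intro sA a1 a2
  constructor
  · exact Finset.sum_nonneg fun g _ => mul_nonneg (hR g a1 a2).1 (hw.1 g).1
  · calc ∑ g ∈ univ.filter (fun g => φ g = sA), R g a1 a2 * w g
        ≤ ∑ g ∈ univ.filter (fun g => φ g = sA), w g :=
          Finset.sum_le_sum fun g _ => mul_le_of_le_one_left (hw.1 g).1 (hR g a1 a2).2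
      _ = 1 := hw.2 sA

/-- The abstract kernel is a kernel. -/
lemma PA_kernel {S SA A1 A2 : Type*} [Fintype S] [Fintype SA] [DecidableEq SA]
    {P : S → A1 → A2 → S → ℝ} {φ : S → SA} {w : S → ℝ}
    (hP : IsKernel P) (hw : IsAggWeight φ w) : IsKernel (PA P φ w) := by
  constructor
  · intro sA a1 a2 sA'
    exact Finset.sum_nonneg fun g _ => Finset.sum_nonneg fun s' _ =>
      mul_nonneg (hP.1 g a1 a2 s') (hw.1 g).1
  · intro sA a1 a2
    unfold PA
    rw [Finset.sum_comm]
    calc ∑ g ∈ univ.filter (fun g => φ g = sA), ∑ sA' : SA,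
          ∑ s' ∈ univ.filter (fun s' => φ s' = sA'), P g a1 a2 s' * w g
        = ∑ g ∈ univ.filter (fun g => φ g = sA), w g := by
          refine Finset.sum_congr rfl fun g _ => ?_
          rw [Finset.sum_fiberwise univ φ (fun s' => P g a1 a2 s' * w g),
            ← Finset.sum_mul, hP.2, one_mul]
      _ = 1 := hw.2 sA

/-- Closeness of ground and abstract rewards. -/
lemma R_close {S SA A1 A2 : Type*} [Fintype S] [DecidableEq SA]
    (R : S → A1 → A2 → ℝ) (φ : S → SA) (w : S → ℝ) (hw : IsAggWeight φ w)
    (ε : ℝ) (hagg : ∀ s1 s2 : S, φ s1 = φ s2 → ∀ (a1 : A1) (a2 : A2),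
      |R s1 a1 a2 - R s2 a1 a2| ≤ ε)
    (s : S) (a1 : A1) (a2 : A2) : |R s a1 a2 - RA R φ w (φ s) a1 a2| ≤ ε := by
  have h1 : ∑ g ∈ univ.filter (fun g => φ g = φ s), w g = 1 := hw.2 (φ s)
  have key : R s a1 a2 - RA R φ w (φ s) a1 a2
      = ∑ g ∈ univ.filter (fun g => φ g = φ s), w g * (R s a1 a2 - R g a1 a2) := by
    have h2 : ∑ g ∈ univ.filter (fun g => φ g = φ s), w g * (R s a1 a2 - R g a1 a2)
        = (∑ g ∈ univ.filter (fun g => φ g = φ s), w g) * R s a1 a2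
          - ∑ g ∈ univ.filter (fun g => φ g = φ s), R g a1 a2 * w g := by
      rw [Finset.sum_mul, ← Finset.sum_sub_distrib]
      exact Finset.sum_congr rfl fun g _ => by ring
    rw [h2, h1, one_mul]
    rfl
  rw [key]
  exact abs_wavg_le _ w _ (fun g _ => (hw.1 g).1) h1
    (fun g hg => hagg s g ((Finset.mem_filter.mp hg).2).symm a1 a2)

/-- Closeness of ground and abstract transitions (aggregated). -/
lemma P_close {S SA A1 A2 : Type*} [Fintype S] [DecidableEq SA]
    (P : S → A1 → A2 → S → ℝ) (φ : S → SA) (w : S → ℝ) (hw : IsAggWeight φ w)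
    (ε : ℝ) (hagg : ∀ s1 s2 : S, φ s1 = φ s2 → ∀ (a1 : A1) (a2 : A2) (sA' : SA),
      |∑ s' ∈ univ.filter (fun s' => φ s' = sA'), (P s1 a1 a2 s' - P s2 a1 a2 s')| ≤ ε)
    (s : S) (a1 : A1) (a2 : A2) (sA' : SA) :
    |(∑ s' ∈ univ.filter (fun s' => φ s' = sA'), P s a1 a2 s')
      - PA P φ w (φ s) a1 a2 sA'| ≤ ε := by
  have h1 : ∑ g ∈ univ.filter (fun g => φ g = φ s), w g = 1 := hw.2 (φ s)
  set p : S → ℝ := fun x => ∑ s' ∈ univ.filter (fun s' => φ s' = sA'), P x a1 a2 s' with hp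
  have key : p s - PA P φ w (φ s) a1 a2 sA'
      = ∑ g ∈ univ.filter (fun g => φ g = φ s), w g * (p s - p g) := by
    have hPA : PA P φ w (φ s) a1 a2 sA'
        = ∑ g ∈ univ.filter (fun g => φ g = φ s), p g * w g := by
      unfold PA
      exact Finset.sum_congr rfl fun g _ => by rw [hp, Finset.sum_mul]
    have h2 : ∑ g ∈ univ.filter (fun g => φ g = φ s), w g * (p s - p g)
        = (∑ g ∈ univ.filter (fun g => φ g = φ s), w g) * p s
          - ∑ g ∈ univ.filter (fun g => φ g = φ s), p g * w g := by
      rw [Finset.sum_mul, ← Finset.sum_sub_distrib]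
      exact Finset.sum_congr rfl fun g _ => by ring
    rw [h2, h1, one_mul, hPA]
  rw [key]
  refine abs_wavg_le _ w _ (fun g _ => (hw.1 g).1) h1 (fun g hg => ?_)
  have hφg : φ s = φ g := ((Finset.mem_filter.mp hg).2).symm
  have := hagg s g hφg a1 a2 sA'
  have hps : p s - p g = ∑ s' ∈ univ.filter (fun s' => φ s' = sA'),
      (P s a1 a2 s' - P g a1 a2 s') := by
    rw [hp, Finset.sum_sub_distrib]
  rw [hps]
  exact this

/-- Decomposition of the difference of ground and abstract Q-functions. -/
lemma Qdiff_eq {S SA A1 A2 : Type*} [Fintype S] [Fintype SA] [DecidableEq SA]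
    (P : S → A1 → A2 → S → ℝ) (R : S → A1 → A2 → ℝ) (γ : ℝ)
    (φ : S → SA) (w : S → ℝ) (V' : S → ℝ) (VA : SA → ℝ) (s : S) (a1 : A1) (a2 : A2) :
    Qf R P γ V' s a1 a2 - Qf (RA R φ w) (PA P φ w) γ VA (φ s) a1 a2
      = (R s a1 a2 - RA R φ w (φ s) a1 a2)
        + γ * ((∑ s', P s a1 a2 s' * (V' s' - VA (φ s')))
          + ∑ sA' : SA, ((∑ s' ∈ univ.filter (fun s' => φ s' = sA'), P s a1 a2 s')
              - PA P φ w (φ s) a1 a2 sA') * VA sA') := by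
  have key : ∑ s', P s a1 a2 s' * VA (φ s')
      = ∑ sA' : SA, (∑ s' ∈ univ.filter (fun s' => φ s' = sA'), P s a1 a2 s') * VA sA' := by
    rw [← Finset.sum_fiberwise univ φ (fun s' => P s a1 a2 s' * VA (φ s'))]
    refine Finset.sum_congr rfl fun sA' _ => ?_
    rw [Finset.sum_mul]
    refine Finset.sum_congr rfl fun s' hs' => ?_
    rw [(Finset.mem_filter.mp hs').2]
  have hexpand : ∑ s', P s a1 a2 s' * V' s'
      = (∑ s', P s a1 a2 s' * (V' s' - VA (φ s'))) + ∑ s', P s a1 a2 s' * VA (φ s') := by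
    rw [← Finset.sum_add_distrib]
    exact Finset.sum_congr rfl fun s' _ => by ring
  have hsub : ∑ sA' : SA, ((∑ s' ∈ univ.filter (fun s' => φ s' = sA'), P s a1 a2 s')
        - PA P φ w (φ s) a1 a2 sA') * VA sA'
      = (∑ sA' : SA, (∑ s' ∈ univ.filter (fun s' => φ s' = sA'), P s a1 a2 s') * VA sA')
        - ∑ sA' : SA, PA P φ w (φ s) a1 a2 sA' * VA sA' := by
    rw [← Finset.sum_sub_distrib]
    exact Finset.sum_congr rfl fun sA' _ => by ring
  unfold Qf
  rw [hsub, ← key, hexpand]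
  ring

/-- Bound on the transition-mismatch term. -/
lemma shift_bound {S SA A1 A2 : Type*} [Fintype S] [Nonempty S] [Fintype SA] [DecidableEq SA]
    (P : S → A1 → A2 → S → ℝ) (φ : S → SA) (w : S → ℝ)
    (hP : IsKernel P) (hw : IsAggWeight φ w) (hφ : Function.Surjective φ)
    (ε : ℝ) (hε : 0 ≤ ε)
    (hagg : ∀ s1 s2 : S, φ s1 = φ s2 → ∀ (a1 : A1) (a2 : A2) (sA' : SA),
      |∑ s' ∈ univ.filter (fun s' => φ s' = sA'), (P s1 a1 a2 s' - P s2 a1 a2 s')| ≤ ε)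
    (VA : SA → ℝ) (K : ℝ) (hK : 0 ≤ K) (hVA : ∀ x, 0 ≤ VA x ∧ VA x ≤ K)
    (s : S) (a1 : A1) (a2 : A2) :
    |∑ sA' : SA, ((∑ s' ∈ univ.filter (fun s' => φ s' = sA'), P s a1 a2 s')
        - PA P φ w (φ s) a1 a2 sA') * VA sA'|
      ≤ ε * K * ((Fintype.card S : ℝ) - 1) := by
  set d : SA → ℝ := fun sA' => (∑ s' ∈ univ.filter (fun s' => φ s' = sA'), P s a1 a2 s')
      - PA P φ w (φ s) a1 a2 sA' with hd
  have hdabs : ∀ sA', |d sA'| ≤ ε := fun sA' => P_close P φ w hw ε hagg s a1 a2 sA'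
  have hd0 : ∑ sA' : SA, d sA' = 0 := by
    have h1 : ∑ sA' : SA, ∑ s' ∈ univ.filter (fun s' => φ s' = sA'), P s a1 a2 s' = 1 := by
      rw [Finset.sum_fiberwise univ φ (P s a1 a2)]
      exact hP.2 s a1 a2
    have h2 : ∑ sA' : SA, PA P φ w (φ s) a1 a2 sA' = 1 := (PA_kernel hP hw).2 (φ s) a1 a2
    rw [hd, Finset.sum_sub_distrib, h1, h2, sub_self]
  set x0 : SA := φ (Classical.arbitrary S) with hx0
  have hshift : ∑ sA' : SA, d sA' * VA sA' = ∑ sA' : SA, d sA' * (VA sA' - VA x0) := by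
    have : ∑ sA' : SA, d sA' * (VA sA' - VA x0)
        = (∑ sA' : SA, d sA' * VA sA') - (∑ sA' : SA, d sA') * VA x0 := by
      rw [Finset.sum_mul, ← Finset.sum_sub_distrib]
      exact Finset.sum_congr rfl fun sA' _ => by ring
    rw [this, hd0, zero_mul, sub_zero]
  rw [hshift]
  have habs : |∑ sA' : SA, d sA' * (VA sA' - VA x0)|
      ≤ ∑ sA' : SA, |d sA' * (VA sA' - VA x0)| := Finset.abs_sum_le_sum_abs _ _
  have hsplit : ∑ sA' : SA, |d sA' * (VA sA' - VA x0)|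
      = ∑ sA' ∈ univ.erase x0, |d sA' * (VA sA' - VA x0)| := by
    rw [← Finset.add_sum_erase univ _ (Finset.mem_univ x0)]
    simp
  have hterm : ∀ sA' ∈ univ.erase x0, |d sA' * (VA sA' - VA x0)| ≤ ε * K := by
    intro sA' _
    rw [abs_mul]
    refine mul_le_mul (hdabs sA') ?_ (abs_nonneg _) hε
    rw [abs_le]
    constructor
    · have := (hVA sA').1; have := (hVA x0).2; linarith
    · have := (hVA sA').2; have := (hVA x0).1; linarith
  have hcard : (Fintype.card SA : ℝ) - 1 ≤ (Fintype.card S : ℝ) - 1 := by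
    have := Fintype.card_le_of_surjective φ hφ
    have : (Fintype.card SA : ℝ) ≤ (Fintype.card S : ℝ) := by exact_mod_cast this
    linarith
  calc |∑ sA' : SA, d sA' * (VA sA' - VA x0)|
      ≤ ∑ sA' ∈ univ.erase x0, |d sA' * (VA sA' - VA x0)| := by rw [← hsplit]; exact habs
    _ ≤ ∑ _sA' ∈ univ.erase x0, ε * K := Finset.sum_le_sum hterm
    _ = ((Fintype.card SA : ℕ) - 1 : ℕ) * (ε * K) := by
        rw [Finset.sum_const, Finset.card_erase_of_mem (Finset.mem_univ x0),
          Finset.card_univ, nsmul_eq_mul]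
    _ ≤ ε * K * ((Fintype.card S : ℝ) - 1) := by
        have hpos : (0:ℕ) < Fintype.card SA := Fintype.card_pos_iff.mpr ⟨x0⟩
        have hcast : (((Fintype.card SA : ℕ) - 1 : ℕ) : ℝ) = (Fintype.card SA : ℝ) - 1 := by
          rw [Nat.cast_sub hpos]; simp
        rw [hcast]
        have hεK : 0 ≤ ε * K := mul_nonneg hε hK
        nlinarith
lemma double_wavg_add_const {A1 A2 : Type*} [Fintype A1] [Fintype A2]
    (p : A1 → ℝ) (q : A2 → ℝ) (f : A1 → A2 → ℝ) (c : ℝ)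
    (hps : ∑ a, p a = 1) (hqs : ∑ a, q a = 1) :
    ∑ a1, ∑ a2, p a1 * q a2 * (f a1 a2 + c)
      = (∑ a1, ∑ a2, p a1 * q a2 * f a1 a2) + c := by
  rw [double_sum_factor, double_sum_factor]
  have h1 : ∀ a1, ∑ a2, q a2 * (f a1 a2 + c) = (∑ a2, q a2 * f a1 a2) + c :=
    fun a1 => wavg_add_const univ q (f a1) c hqs
  rw [Finset.sum_congr rfl fun a1 _ => by rw [h1 a1]]
  exact wavg_add_const univ p (fun a1 => ∑ a2, q a2 * f a1 a2) c hps

/-- At a Nash equilibrium, the value dominates every one-step deviation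
of player 1. -/
lemma nash_greedy {S A1 A2 : Type*} [Fintype S] [Nonempty S] [Fintype A1] [Fintype A2]
    (R : S → A1 → A2 → ℝ) (P : S → A1 → A2 → S → ℝ) (γ : ℝ)
    (hP : IsKernel P) (hγ0 : 0 ≤ γ) (hγ1 : γ < 1)
    (Val : (S → A1 → ℝ) → (S → A2 → ℝ) → S → ℝ)
    (hVal : IsValueOperator R P γ Val)
    (π1 : S → A1 → ℝ) (π2 : S → A2 → ℝ) (hN : IsNash Val π1 π2) :
    ∀ (s : S) (b1 : A1),
      ∑ a2, π2 s a2 * Qf R P γ (Val π1 π2) s b1 a2 ≤ Val π1 π2 s := by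
  classical
  intro s b1
  set V := Val π1 π2 with hVdef
  have hV : IsValue R P γ π1 π2 V := hVal π1 π2 hN.1 hN.2.1
  set π1' : S → A1 → ℝ := fun x a => if x = s then (if a = b1 then 1 else 0) else π1 x a
    with hπ1'
  have hpol' : IsPolicy π1' := by
    constructor
    · intro x a; rw [hπ1']; dsimp only
      split
      · split <;> norm_num
      · exact hN.1.1 x a
    · intro x; rw [hπ1']; dsimp only
      split
      · simp
      · exact hN.1.2 x
  set V' := Val π1' π2 with hV'def
  have hV' : IsValue R P γ π1' π2 V' := hVal π1' π2 hpol' hN.2.1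
  have hle : ∀ x, V' x ≤ V x := fun x => (hN.2.2 x π1' π2 hpol' hN.2.1).2
  obtain ⟨s0, _, hs0⟩ := Finset.exists_min_image univ (fun x => V' x - V x) univ_nonempty
  set m := V' s0 - V s0 with hm
  have hml : ∀ x, m ≤ V' x - V x := fun x => hs0 x (Finset.mem_univ x)
  have hkey : ∀ x, (∑ a1, ∑ a2, π1' x a1 * π2 x a2 * Qf R P γ V x a1 a2) + γ * m ≤ V' x := by
    intro x
    have hpt : ∀ a1 a2, Qf R P γ V x a1 a2 + γ * m ≤ Qf R P γ V' x a1 a2 := by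
      intro a1 a2
      unfold Qf
      have h2 : ∑ s', P x a1 a2 s' * (V s' + m) = (∑ s', P x a1 a2 s' * V s') + m :=
        wavg_add_const univ (P x a1 a2) V m (hP.2 x a1 a2)
      have h3 : ∑ s', P x a1 a2 s' * (V s' + m) ≤ ∑ s', P x a1 a2 s' * V' s' :=
        Finset.sum_le_sum fun s' _ => mul_le_mul_of_nonneg_left
          (by have := hml s'; linarith) (hP.1 x a1 a2 s')
      have h4 : (∑ s', P x a1 a2 s' * V s') + m ≤ ∑ s', P x a1 a2 s' * V' s' := by
        rw [← h2]; exact h3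
      have h5 := mul_le_mul_of_nonneg_left h4 hγ0
      linarith
    have hsum : ∑ a1, ∑ a2, π1' x a1 * π2 x a2 * (Qf R P γ V x a1 a2 + γ * m)
        ≤ ∑ a1, ∑ a2, π1' x a1 * π2 x a2 * Qf R P γ V' x a1 a2 :=
      Finset.sum_le_sum fun a1 _ => Finset.sum_le_sum fun a2 _ =>
        mul_le_mul_of_nonneg_left (hpt a1 a2)
          (mul_nonneg (hpol'.1 x a1) (hN.2.1.1 x a2))
    rw [double_wavg_add_const _ _ _ _ (hpol'.2 x) (hN.2.1.2 x)] at hsum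
    rw [hV' x]
    exact hsum
  have hs_eval : (∑ a1, ∑ a2, π1' s a1 * π2 s a2 * Qf R P γ V s a1 a2)
      = ∑ a2, π2 s a2 * Qf R P γ V s b1 a2 := by
    have hfac : ∀ a1 : A1, ∑ a2, π1' s a1 * π2 s a2 * Qf R P γ V s a1 a2
        = π1' s a1 * ∑ a2, π2 s a2 * Qf R P γ V s a1 a2 := by
      intro a1; rw [Finset.mul_sum]; exact Finset.sum_congr rfl fun a2 _ => by ring
    rw [Finset.sum_congr rfl fun a1 _ => hfac a1]
    have hπs : ∀ a : A1, π1' s a = if a = b1 then (1:ℝ) else 0 := fun a => by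
      rw [hπ1']; simp
    rw [Finset.sum_congr rfl fun a1 _ => by rw [hπs a1]]
    rw [Finset.sum_congr rfl fun a1 _ => (ite_mul _ _ _ _ : _)]
    simp [Finset.sum_ite_eq']
  have hne_eval : ∀ x, x ≠ s →
      (∑ a1, ∑ a2, π1' x a1 * π2 x a2 * Qf R P γ V x a1 a2) = V x := by
    intro x hx
    rw [hV x]
    refine Finset.sum_congr rfl fun a1 _ => Finset.sum_congr rfl fun a2 _ => ?_
    rw [hπ1']; simp [hx]
  have hmle : m ≤ 0 := by have := hle s0; rw [hm]; linarith
  by_cases hcase : s0 = s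
  · have h1 := hkey s
    rw [hs_eval] at h1
    have h2 : V' s ≤ V s := hle s
    have h3 : m = V' s - V s := by rw [hm, hcase]
    have h4 : 0 ≤ (-m) * (1 - γ) := mul_nonneg (by linarith) (by linarith)
    nlinarith
  · have h1 := hkey s0
    rw [hne_eval s0 hcase] at h1
    have hm0 : m = 0 := by
      have h4 : 0 ≤ m * (1 - γ) := by nlinarith
      nlinarith
    have h2 := hkey s
    rw [hs_eval, hm0] at h2
    have := hle s
    linarith

end Helpers

theorem best_response_Q_close_to_abstract_Q_model_similarity
    {S SA A1 A2 : Type*}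
    [Fintype S] [Nonempty S] [Fintype SA] [DecidableEq SA]
    [Fintype A1] [Nonempty A1] [Fintype A2] [Nonempty A2]
    (P : S → A1 → A2 → S → ℝ) (R : S → A1 → A2 → ℝ) (γ : ℝ)
    (hP : IsKernel P) (hR : IsReward R) (hγ0 : 0 ≤ γ) (hγ1 : γ < 1)
    (Val : (S → A1 → ℝ) → (S → A2 → ℝ) → S → ℝ)
    (hVal : IsValueOperator R P γ Val)
    (φ : S → SA) (hφ : Function.Surjective φ)
    (w : S → ℝ) (hw : IsAggWeight φ w)
    (ValA : (SA → A1 → ℝ) → (SA → A2 → ℝ) → SA → ℝ)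
    (hValA : IsValueOperator (RA R φ w) (PA P φ w) γ ValA)
    (πA1 : SA → A1 → ℝ) (πA2 : SA → A2 → ℝ)
    (hNashA : IsNash ValA πA1 πA2)
    (π1d : S → A1 → ℝ)
    (hBR : IsBestResponse1 Val π1d (fun s => πA2 (φ s)))
    (ε : ℝ) (hε : 0 ≤ ε)
    (hagg : ∀ s1 s2 : S, φ s1 = φ s2 → ∀ (a1 : A1) (a2 : A2),
      |R s1 a1 a2 - R s2 a1 a2| ≤ ε ∧
      ∀ sA' : SA,
        |∑ s' ∈ univ.filter (fun s' => φ s' = sA'), (P s1 a1 a2 s' - P s2 a1 a2 s')| ≤ ε)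
    :
    ∀ (s : S) (a1 : A1) (a2 : A2),
      |Qf R P γ (Val π1d (fun s => πA2 (φ s))) s a1 a2 - Qf (RA R φ w) (PA P φ w) γ (ValA πA1 πA2) (φ s) a1 a2|
        ≤ ε * (1 + γ * ((Fintype.card S : ℝ) - 1)) / (1 - γ) ^ 2 := by
  classical
  haveI hSAne : Nonempty SA := ⟨φ (Classical.arbitrary S)⟩
  have h1γ : (0:ℝ) < 1 - γ := by linarith
  have hKnn : (0:ℝ) ≤ 1 / (1 - γ) := by positivity
  have hRA : IsReward (RA R φ w) := RA_reward hR hw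
  have hPA : IsKernel (PA P φ w) := PA_kernel hP hw
  have hπA1 : IsPolicy πA1 := hNashA.1
  have hπA2 : IsPolicy πA2 := hNashA.2.1
  set cS : ℝ := (Fintype.card S : ℝ) with hcSdef
  have hcS1 : (1:ℝ) ≤ cS := by
    rw [hcSdef]
    exact_mod_cast Fintype.card_pos_iff.mpr ‹Nonempty S›
  set π2g : S → A2 → ℝ := fun x => πA2 (φ x) with hπ2g
  have hπ2gpol : IsPolicy π2g := ⟨fun x a => hπA2.1 (φ x) a, fun x => hπA2.2 (φ x)⟩
  set π1g : S → A1 → ℝ := fun x => πA1 (φ x) with hπ1g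
  have hπ1gpol : IsPolicy π1g := ⟨fun x a => hπA1.1 (φ x) a, fun x => hπA1.2 (φ x)⟩
  have hπ1d : IsPolicy π1d := hBR.1
  set VA : SA → ℝ := ValA πA1 πA2 with hVAdef
  have hVA : IsValue (RA R φ w) (PA P φ w) γ πA1 πA2 VA := by
    have := hValA πA1 πA2 hπA1 hπA2; rw [← hVAdef] at this; exact this
  have hVAbd : ∀ x, 0 ≤ VA x ∧ VA x ≤ 1 / (1 - γ) :=
    value_bounds hPA hRA hγ0 hγ1 hπA1 hπA2 hVA
  set V : S → ℝ := Val π1d π2g with hVdef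
  have hVB : IsValue R P γ π1d π2g V := by
    have := hVal π1d π2g hπ1d hπ2gpol; rw [← hVdef] at this; exact this
  set W : S → ℝ := Val π1g π2g with hWdef
  have hWB : IsValue R P γ π1g π2g W := by
    have := hVal π1g π2g hπ1gpol hπ2gpol; rw [← hWdef] at this; exact this
  have hWV : ∀ x, W x ≤ V x := by
    intro x
    have := hBR.2 π1g hπ1gpol x
    rw [← hVdef, ← hWdef] at this
    exact this
  clear_value cS π2g π1g VA V W
  set E3 : ℝ := ε * (1 / (1 - γ)) * (cS - 1) with hE3def
  have hE3nn : 0 ≤ E3 := by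
    rw [hE3def]; exact mul_nonneg (mul_nonneg hε hKnn) (by linarith)
  clear_value E3
  set B : ℝ := ε + γ * E3 with hBdef
  have hBnn : 0 ≤ B := by rw [hBdef]; positivity
  clear_value B
  have haggR : ∀ s1 s2 : S, φ s1 = φ s2 → ∀ (b1 : A1) (b2 : A2),
      |R s1 b1 b2 - R s2 b1 b2| ≤ ε := fun s1 s2 h b1 b2 => (hagg s1 s2 h b1 b2).1
  have haggP : ∀ s1 s2 : S, φ s1 = φ s2 → ∀ (b1 : A1) (b2 : A2) (sA' : SA),
      |∑ s' ∈ univ.filter (fun s' => φ s' = sA'), (P s1 b1 b2 s' - P s2 b1 b2 s')| ≤ ε :=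
    fun s1 s2 h b1 b2 sA' => (hagg s1 s2 h b1 b2).2 sA'
  have hRcl := R_close R φ w hw ε haggR
  have hShift : ∀ (x : S) (b1 : A1) (b2 : A2),
      |∑ sA' : SA, ((∑ s' ∈ univ.filter (fun s' => φ s' = sA'), P x b1 b2 s')
          - PA P φ w (φ x) b1 b2 sA') * VA sA'| ≤ E3 := by
    intro x b1 b2
    rw [hE3def, hcSdef]
    exact shift_bound P φ w hP hw hφ ε hε haggP VA (1 / (1 - γ)) hKnn hVAbd x b1 b2
  -- one-sided one-step bounds
  have hQub : ∀ (V' : S → ℝ) (e : ℝ), (∀ x, V' x - VA (φ x) ≤ e) →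
      ∀ (x : S) (b1 : A1) (b2 : A2),
      Qf R P γ V' x b1 b2 - Qf (RA R φ w) (PA P φ w) γ VA (φ x) b1 b2 ≤ B + γ * e := by
    intro V' e he x b1 b2
    have hdq := Qdiff_eq P R γ φ w V' VA x b1 b2
    have t0 := abs_le.mp (hRcl x b1 b2)
    have t1 : ∑ s', P x b1 b2 s' * (V' s' - VA (φ s')) ≤ e :=
      wavg_le univ (P x b1 b2) _ (fun s' _ => hP.1 x b1 b2 s') (hP.2 x b1 b2)
        (fun s' _ => he s')
    have t3 := abs_le.mp (hShift x b1 b2)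
    have hmul : γ * ((∑ s', P x b1 b2 s' * (V' s' - VA (φ s')))
        + ∑ sA' : SA, ((∑ s' ∈ univ.filter (fun s' => φ s' = sA'), P x b1 b2 s')
            - PA P φ w (φ x) b1 b2 sA') * VA sA') ≤ γ * (e + E3) :=
      mul_le_mul_of_nonneg_left (by linarith [t1, t3.2]) hγ0
    rw [hBdef]
    linarith [hdq, t0.2, hmul]
  have hQlb : ∀ (V' : S → ℝ) (e : ℝ), (∀ x, VA (φ x) - V' x ≤ e) →
      ∀ (x : S) (b1 : A1) (b2 : A2),
      Qf (RA R φ w) (PA P φ w) γ VA (φ x) b1 b2 - Qf R P γ V' x b1 b2 ≤ B + γ * e := by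
    intro V' e he x b1 b2
    have hdq := Qdiff_eq P R γ φ w V' VA x b1 b2
    have t0 := abs_le.mp (hRcl x b1 b2)
    have t1 : -e ≤ ∑ s', P x b1 b2 s' * (V' s' - VA (φ s')) :=
      wavg_ge univ (P x b1 b2) _ (fun s' _ => hP.1 x b1 b2 s') (hP.2 x b1 b2)
        (fun s' _ => by have := he s'; linarith)
    have t3 := abs_le.mp (hShift x b1 b2)
    have hmul : γ * (-((∑ s', P x b1 b2 s' * (V' s' - VA (φ s')))
        + ∑ sA' : SA, ((∑ s' ∈ univ.filter (fun s' => φ s' = sA'), P x b1 b2 s')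
            - PA P φ w (φ x) b1 b2 sA') * VA sA')) ≤ γ * (e + E3) :=
      mul_le_mul_of_nonneg_left (by linarith [t1, t3.1]) hγ0
    rw [hBdef]
    linarith [hdq, t0.1, hmul]
  -- upper value recursion via best response and abstract Nash greediness
  obtain ⟨su, _, hsu⟩ := Finset.exists_max_image univ (fun x => V x - VA (φ x)) univ_nonempty
  set e : ℝ := V su - VA (φ su) with hedef
  have heprop : ∀ x, V x - VA (φ x) ≤ e := fun x => hsu x (Finset.mem_univ x)
  clear_value e
  obtain ⟨b1, _, hb1⟩ := Finset.exists_max_image univ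
    (fun c1 => ∑ a2, π2g su a2 * Qf R P γ V su c1 a2) univ_nonempty
  have hVsu : V su ≤ ∑ a2, π2g su a2 * Qf R P γ V su b1 a2 := by
    conv_lhs => rw [hVB su]
    rw [double_sum_factor]
    exact wavg_le univ (π1d su) _ (fun c _ => hπ1d.1 su c) (hπ1d.2 su)
      (fun c hc => hb1 c hc)
  have hgreedy : ∑ a2, πA2 (φ su) a2 * Qf (RA R φ w) (PA P φ w) γ VA (φ su) b1 a2
      ≤ VA (φ su) := by
    have := nash_greedy (RA R φ w) (PA P φ w) γ hPA hγ0 hγ1 ValA hValA πA1 πA2 hNashA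
      (φ su) b1
    rw [← hVAdef] at this
    exact this
  have hstep : ∑ a2, π2g su a2 * Qf R P γ V su b1 a2 ≤ VA (φ su) + (B + γ * e) := by
    have h1 : ∑ a2, π2g su a2 * Qf R P γ V su b1 a2
        ≤ ∑ a2, π2g su a2 * (Qf (RA R φ w) (PA P φ w) γ VA (φ su) b1 a2 + (B + γ * e)) :=
      Finset.sum_le_sum fun a2 _ => mul_le_mul_of_nonneg_left
        (by have := hQub V e heprop su b1 a2; linarith) (hπ2gpol.1 su a2)
    have h2 : ∑ a2, π2g su a2 * (Qf (RA R φ w) (PA P φ w) γ VA (φ su) b1 a2 + (B + γ * e))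
        = (∑ a2, π2g su a2 * Qf (RA R φ w) (PA P φ w) γ VA (φ su) b1 a2) + (B + γ * e) :=
      wavg_add_const univ (π2g su) _ _ (hπ2gpol.2 su)
    have h3 : ∑ a2, π2g su a2 * Qf (RA R φ w) (PA P φ w) γ VA (φ su) b1 a2
        = ∑ a2, πA2 (φ su) a2 * Qf (RA R φ w) (PA P φ w) γ VA (φ su) b1 a2 := by
      rw [hπ2g]
    linarith [h1, h2 ▸ h1, hgreedy, h3 ▸ hgreedy]
  have he_rec : e ≤ B + γ * e := by
    linarith [hVsu, hstep, hedef.le, hedef.ge]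
  -- lower value recursion via ground Nash policy
  obtain ⟨sl, _, hsl⟩ := Finset.exists_max_image univ (fun x => VA (φ x) - W x) univ_nonempty
  set e2 : ℝ := VA (φ sl) - W sl with he2def
  have heprop2 : ∀ x, VA (φ x) - W x ≤ e2 := fun x => hsl x (Finset.mem_univ x)
  clear_value e2
  have he2_rec : e2 ≤ B + γ * e2 := by
    have hWs : W sl = ∑ c1, ∑ c2, πA1 (φ sl) c1 * πA2 (φ sl) c2 * Qf R P γ W sl c1 c2 := by
      have := hWB sl
      rw [hπ1g, hπ2g] at this
      exact this
    have hVAs : VA (φ sl) = ∑ c1, ∑ c2, πA1 (φ sl) c1 * πA2 (φ sl) c2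
        * Qf (RA R φ w) (PA P φ w) γ VA (φ sl) c1 c2 := hVA (φ sl)
    have hdiff : VA (φ sl) - W sl = ∑ c1, ∑ c2, πA1 (φ sl) c1 * πA2 (φ sl) c2
        * (Qf (RA R φ w) (PA P φ w) γ VA (φ sl) c1 c2 - Qf R P γ W sl c1 c2) := by
      rw [hVAs, hWs, ← Finset.sum_sub_distrib]
      refine Finset.sum_congr rfl fun c1 _ => ?_
      rw [← Finset.sum_sub_distrib]
      exact Finset.sum_congr rfl fun c2 _ => by ring
    have hdw : ∑ c1, ∑ c2, πA1 (φ sl) c1 * πA2 (φ sl) c2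
        * (Qf (RA R φ w) (PA P φ w) γ VA (φ sl) c1 c2 - Qf R P γ W sl c1 c2)
        ≤ B + γ * e2 :=
      double_wavg_le _ _ _ (hπA1.1 (φ sl)) (hπA1.2 (φ sl)) (hπA2.1 (φ sl))
        (hπA2.2 (φ sl)) (fun c1 c2 => hQlb W e2 heprop2 sl c1 c2)
    linarith [hdw, hdiff.le, hdiff.ge, he2def.le, he2def.ge]
  -- solve the recursions
  have hBe : B + γ * e ≤ B / (1 - γ) := by
    rw [le_div_iff₀ h1γ]
    have h := mul_nonneg hγ0 (show (0:ℝ) ≤ B - (e - γ * e) by linarith [he_rec])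
    nlinarith [h]
  have hBe2 : B + γ * e2 ≤ B / (1 - γ) := by
    rw [le_div_iff₀ h1γ]
    have h := mul_nonneg hγ0 (show (0:ℝ) ≤ B - (e2 - γ * e2) by linarith [he2_rec])
    nlinarith [h]
  -- final assembly
  intro s a1 a2
  have h_up : Qf R P γ V s a1 a2 - Qf (RA R φ w) (PA P φ w) γ VA (φ s) a1 a2 ≤ B + γ * e :=
    hQub V e heprop s a1 a2
  have h_dn : Qf (RA R φ w) (PA P φ w) γ VA (φ s) a1 a2 - Qf R P γ V s a1 a2 ≤ B + γ * e2 :=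
    hQlb V e2 (fun x => by have := heprop2 x; have := hWV x; linarith) s a1 a2
  have habs : |Qf R P γ V s a1 a2 - Qf (RA R φ w) (PA P φ w) γ VA (φ s) a1 a2|
      ≤ B / (1 - γ) := by
    rw [abs_le]
    constructor
    · linarith [h_dn, hBe2]
    · linarith [h_up, hBe]
  have hfinal : B / (1 - γ) ≤ ε * (1 + γ * (cS - 1)) / (1 - γ) ^ 2 := by
    rw [div_le_div_iff₀ h1γ (by positivity)]
    have hne : (1 - γ) ≠ 0 := ne_of_gt h1γ
    have hB1 : B * (1 - γ) = ε * (1 - γ) + γ * (ε * (cS - 1)) := by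
      rw [hBdef, hE3def]
      field_simp
    have hnum : ε * (1 - γ) + γ * (ε * (cS - 1)) ≤ ε * (1 + γ * (cS - 1)) := by
      nlinarith [mul_nonneg hε hγ0]
    calc B * (1 - γ) ^ 2 = (B * (1 - γ)) * (1 - γ) := by ring
      _ = (ε * (1 - γ) + γ * (ε * (cS - 1))) * (1 - γ) := by rw [hB1]
      _ ≤ (ε * (1 + γ * (cS - 1))) * (1 - γ) :=
          mul_le_mul_of_nonneg_right hnum (le_of_lt h1γ)
  exact habs.trans hfinal
end
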